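/- arXiv:1309.1761 — 7 statements merged into one kernel-verified Lean document; each statement's English description precedes it below -/
import Mathlib

section
/- Let {z_n} be generated by the selective sampling process S(κ,Φ) where Φ(x,S) = inf{d(x,s) : s ∈ S} is the distance-to-sample-set heuristic and κ satisfies Σ_{n=1}^∞ ρ^{κ(n)} = ∞ for every 0 < ρ ≤ 1. If x ∈ supp(μ) is not an f-boundary point, then the nearest neighbor predictions satisfy ζ_n(x) → f(x) with probability one. -/
open MeasureTheory ProbabilityTheory Filter Metric

/-- The support of a measure on a metric space: points all of whose open balls
have positive measure. -/
def measSupport {X : Type*} [MetricSpace X] [MeasurableSpace X]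
    (μ : Measure X) : Set X :=
  {x | ∀ ε > 0, 0 < μ (ball x ε)}

/-- `b` is an `f`-boundary point iff every ball about `b` meets the set of points
with a different `f`-value in positive measure. -/
def IsFBoundaryPoint {X Y : Type*} [MetricSpace X] [MeasurableSpace X]
    (f : X → Y) (μ : Measure X) (b : X) : Prop :=
  ∀ ε > 0, 0 < μ (ball b ε ∩ {x | f x ≠ f b})

/-- The sample set `Z_n(ω) = {z_1(ω), …, z_n(ω)}`. -/
def sampleSet {X Ω : Type*} (z : ℕ → Ω → X) (n : ℕ) (ω : Ω) : Set X :=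
  {p | ∃ k, 1 ≤ k ∧ k ≤ n ∧ z k ω = p}

/-! If `x` is in the support of `μ` but not an `f`-boundary point, there is a ball `B = B_ε(x)`
of positive measure `p` on which `f = f x` outside a `μ`-null set. At step `n + 1` all `κ (n + 1)`
candidates fall in `B` with probability `p ^ κ (n + 1)`; these events are independent and their
probabilities have divergent sum, so by the second Borel–Cantelli lemma one of them occurs almost
surely, and then the selected sample lies in `B` whichever candidate the heuristic picks. From then
on the nearest sample to `x` lies in `B`, and since every sample is a candidate, almost surely no
sample lands in the null set where `f ≠ f x`. -/

open scoped ENNReal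

theorem ENNReal.tsum_pow_succ_eq_top {p : ℝ≥0∞} (κ : ℕ → ℕ)
    (h : Tendsto (fun N => ∑ n ∈ Finset.Icc 1 N, p.toReal ^ κ n) atTop atTop) :
    ∑' n, p ^ κ (n + 1) = ∞ := by
  by_contra hfin
  have hsum : Summable fun n => p.toReal ^ κ (n + 1) := by
    simpa only [ENNReal.toReal_pow] using ENNReal.summable_toReal hfin
  refine (not_summable_iff_tendsto_nat_atTop_of_nonneg fun n => by positivity).2 ?_ hsum
  refine h.congr fun N => ?_
  rw [← Finset.Ico_add_one_right_eq_Icc, Finset.sum_Ico_eq_sum_range, add_tsub_cancel_right]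
  simp only [add_comm 1]

section Blocks

variable {Ω X ι : Type*} [MeasurableSpace Ω] [MeasurableSpace X] {P : Measure Ω} {μ : Measure X}
  {β : ι → Type*} [∀ n, Fintype (β n)] {g : (Σ n, β n) → Ω → X} {s : Set X}

theorem measure_biInter_iInter_preimage_eq_prod (hg : ∀ p, MeasurePreserving (g p) P μ)
    (hindep : iIndepFun g P) (hs : MeasurableSet s) (T : Finset ι) :
    P (⋂ n ∈ T, ⋂ i, g ⟨n, i⟩ ⁻¹' s) = ∏ n ∈ T, μ s ^ Fintype.card (β n) := by
  have hblocks : ⋂ n ∈ T, ⋂ i, g ⟨n, i⟩ ⁻¹' s = ⋂ p ∈ T.sigma fun _ => Finset.univ, g p ⁻¹' s := by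
    ext ω
    simp only [Set.mem_iInter, Set.mem_preimage, Finset.mem_sigma, Finset.mem_univ, and_true,
      Sigma.forall]
    exact ⟨fun h n i hn => h n hn i, fun h n hn i => h n i hn⟩
  rw [hblocks, hindep.measure_inter_preimage_eq_mul _ fun _ _ => hs, Finset.prod_sigma]
  simp only [(hg _).measure_preimage hs.nullMeasurableSet, Finset.prod_const, Finset.card_univ]

theorem measure_iInter_preimage_eq_pow (hg : ∀ p, MeasurePreserving (g p) P μ)
    (hindep : iIndepFun g P) (hs : MeasurableSet s) (n : ι) :
    P (⋂ i, g ⟨n, i⟩ ⁻¹' s) = μ s ^ Fintype.card (β n) := by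
  simpa using measure_biInter_iInter_preimage_eq_prod hg hindep hs {n}

theorem iIndepSet_iInter_preimage (hg : ∀ p, MeasurePreserving (g p) P μ)
    (hindep : iIndepFun g P) (hs : MeasurableSet s) :
    iIndepSet (fun n => ⋂ i, g ⟨n, i⟩ ⁻¹' s) P := by
  have hmeas (n : ι) : MeasurableSet (⋂ i, g ⟨n, i⟩ ⁻¹' s) :=
    .iInter fun i => (hg _).measurable hs
  refine (iIndepSet_iff_meas_biInter hmeas).2 fun T => ?_
  simp only [measure_biInter_iInter_preimage_eq_prod hg hindep hs,
    measure_iInter_preimage_eq_pow hg hindep hs]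

theorem ae_frequently_forall_mem_of_tsum_eq_top {β : ℕ → Type*} [∀ n, Fintype (β n)]
    {g : (Σ n, β n) → Ω → X} (hg : ∀ p, MeasurePreserving (g p) P μ)
    (hindep : iIndepFun g P) (hs : MeasurableSet s)
    (hdiv : ∑' n, μ s ^ Fintype.card (β n) = ∞) :
    ∀ᵐ ω ∂P, ∃ᶠ n in atTop, ∀ i, g ⟨n, i⟩ ω ∈ s := by
  have hmeas (n : ℕ) : MeasurableSet (⋂ i, g ⟨n, i⟩ ⁻¹' s) :=
    .iInter fun i => (hg _).measurable hs
  have hindep_blocks := iIndepSet_iInter_preimage hg hindep hs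
  have := hindep_blocks.isProbabilityMeasure
  have hlimsup := measure_limsup_eq_one hmeas hindep_blocks <| by
    simpa only [measure_iInter_preimage_eq_pow hg hindep hs] using hdiv
  have hae := (mem_ae_iff_prob_eq_one (.measurableSet_limsup hmeas)).2 hlimsup
  filter_upwards [hae] with ω hω
  simpa [mem_limsup_iff_frequently_mem] using hω

end Blocks

theorem ae_ball_eq_of_not_isFBoundaryPoint {X Y : Type*} [MetricSpace X] [MeasurableSpace X]
    {f : X → Y} {μ : Measure X} {x : X} (hx : ¬ IsFBoundaryPoint f μ x) :
    ∃ ε > 0, ∀ᵐ y ∂μ, y ∈ ball x ε → f y = f x := by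
  simp only [IsFBoundaryPoint, not_forall, not_lt, nonpos_iff_eq_zero] at hx
  obtain ⟨ε, hε, hnull⟩ := hx
  exact ⟨ε, hε, ae_iff.2 <| measure_mono_null (fun y hy => Classical.not_imp.1 hy) hnull⟩

theorem dist_heuristic_pointwise_convergence_general
    {X : Type*} [MetricSpace X] [MeasurableSpace X] [BorelSpace X]
    {Y : Type*}
    (μ : Measure X) [IsProbabilityMeasure μ] (f : X → Y)
    {Ω : Type*} [MeasurableSpace Ω] (P : Measure Ω)
    -- the candidate-count function κ : ℕ⁺ → ℕ⁺ (κ (n+1) candidates at step n+1)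
    (κ : ℕ → ℕ)
    (hκ : ∀ ρ : ℝ, 0 < ρ → ρ ≤ 1 →
      Tendsto (fun N => ∑ n ∈ Finset.Icc 1 N, ρ ^ κ n) atTop atTop)
    -- at step n+1, κ(n+1) candidates are drawn, iid with law μ
    (cand : (n : ℕ) → Fin (κ (n + 1)) → Ω → X)
    (hmeas : ∀ n i, Measurable (cand n i))
    (hlaw : ∀ n i, P.map (cand n i) = μ)
    (hindep : iIndepFun
      (fun p : Σ n : ℕ, Fin (κ (n + 1)) => cand p.1 p.2) P)
    -- the sample z_{n+1} is a candidate maximizing Φ(·, Z_n) = d(·, Z_n)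
    (z : ℕ → Ω → X)
    (hsel : ∀ ω n, ∃ i : Fin (κ (n + 1)), z (n + 1) ω = cand n i ω ∧
      ∀ j : Fin (κ (n + 1)),
        infDist (cand n j ω) (sampleSet z n ω) ≤
          infDist (cand n i ω) (sampleSet z n ω))
    -- ζ_n is a nearest neighbor prediction over Z_n (ties broken arbitrarily)
    (ζ : ℕ → Ω → X → Y)
    (hζ : ∀ ω x n, 1 ≤ n → ∃ i, 1 ≤ i ∧ i ≤ n ∧
      (∀ j, 1 ≤ j → j ≤ n → dist x (z i ω) ≤ dist x (z j ω)) ∧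
      ζ n ω x = f (z i ω))
    (x : X) (hx : x ∈ measSupport μ) (hxb : ¬ IsFBoundaryPoint f μ x) :
    ∀ᵐ ω ∂P, ∀ᶠ n in atTop, ζ n ω x = f x := by
  obtain ⟨ε, hε, hgood⟩ := ae_ball_eq_of_not_isFBoundaryPoint hxb
  have hcand : ∀ p : Σ n, Fin (κ (n + 1)), MeasurePreserving (cand p.1 p.2) P μ :=
    fun p => ⟨hmeas _ _, hlaw _ _⟩
  have hcand_good : ∀ᵐ ω ∂P, ∀ n i, cand n i ω ∈ ball x ε → f (cand n i ω) = f x :=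
    ae_all_iff.2 fun n => ae_all_iff.2 fun i =>
      ae_of_ae_map (hmeas n i).aemeasurable (by rwa [hlaw])
  have hρ : 0 < μ.real (ball x ε) := ENNReal.toReal_pos (hx ε hε).ne' (measure_ne_top _ _)
  have hhit : ∀ᵐ ω ∂P, ∃ᶠ n in atTop, ∀ i, cand n i ω ∈ ball x ε :=
    ae_frequently_forall_mem_of_tsum_eq_top (β := fun n => Fin (κ (n + 1)))
      (g := fun p => cand p.1 p.2) hcand hindep measurableSet_ball (by
        simpa only [Fintype.card_fin] using
          ENNReal.tsum_pow_succ_eq_top κ (hκ _ hρ measureReal_le_one))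
  filter_upwards [hcand_good, hhit] with ω hω_good hω_hit
  have hz_good (m : ℕ) (hm : z (m + 1) ω ∈ ball x ε) : f (z (m + 1) ω) = f x := by
    obtain ⟨i, hi, -⟩ := hsel ω m
    rw [hi] at hm ⊢
    exact hω_good m i hm
  obtain ⟨n₀, hn₀⟩ := hω_hit.exists
  obtain ⟨i₀, hi₀, -⟩ := hsel ω n₀
  refine eventually_atTop.2 ⟨n₀ + 1, fun n hn => ?_⟩
  obtain ⟨i, hi1, hin, hmin, hζi⟩ := hζ ω x n (by omega)
  obtain ⟨m, rfl⟩ : ∃ m, i = m + 1 := ⟨i - 1, by omega⟩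
  rw [hζi]
  refine hz_good m (mem_ball_comm.1 ?_)
  calc dist x (z (m + 1) ω) ≤ dist x (z (n₀ + 1) ω) := hmin _ (by omega) hn
    _ < ε := by rw [hi₀, dist_comm]; exact hn₀ i₀

/-- **Convergence of the distance-to-sample-set heuristic.**
If the samples are generated by the selective sampling process `S(κ, Φ)` with
`Φ(x, S) = d(x, S)` and `∑ ρ^{κ(n)} = ∞` for all `0 < ρ ≤ 1`, then at every
point `x` of the support of `μ` that is not an `f`-boundary point, the nearest
neighbor predictions `ζ_n(x)` converge to `f(x)` with probability one. -/
theorem dist_heuristic_pointwise_convergence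
    {X : Type*} [MetricSpace X] [MeasurableSpace X] [BorelSpace X]
    {Y : Type*} [Countable Y]
    (μ : Measure X) [IsProbabilityMeasure μ] (f : X → Y)
    {Ω : Type*} [MeasurableSpace Ω] (P : Measure Ω) [IsProbabilityMeasure P]
    -- the candidate-count function κ : ℕ⁺ → ℕ⁺ (κ (n+1) candidates at step n+1)
    (κ : ℕ → ℕ) (hκpos : ∀ n, 1 ≤ κ n)
    (hκ : ∀ ρ : ℝ, 0 < ρ → ρ ≤ 1 →
      Tendsto (fun N => ∑ n ∈ Finset.Icc 1 N, ρ ^ κ n) atTop atTop)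
    -- at step n+1, κ(n+1) candidates are drawn, iid with law μ
    (cand : (n : ℕ) → Fin (κ (n + 1)) → Ω → X)
    (hmeas : ∀ n i, Measurable (cand n i))
    (hlaw : ∀ n i, P.map (cand n i) = μ)
    (hindep : iIndepFun
      (fun p : Σ n : ℕ, Fin (κ (n + 1)) => cand p.1 p.2) P)
    -- the sample z_{n+1} is a candidate maximizing Φ(·, Z_n) = d(·, Z_n)
    (z : ℕ → Ω → X)
    (hsel : ∀ ω n, ∃ i : Fin (κ (n + 1)), z (n + 1) ω = cand n i ω ∧
      ∀ j : Fin (κ (n + 1)),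
        infDist (cand n j ω) (sampleSet z n ω) ≤
          infDist (cand n i ω) (sampleSet z n ω))
    -- ζ_n is a nearest neighbor prediction over Z_n (ties broken arbitrarily)
    (ζ : ℕ → Ω → X → Y)
    (hζ : ∀ ω x n, 1 ≤ n → ∃ i, 1 ≤ i ∧ i ≤ n ∧
      (∀ j, 1 ≤ j → j ≤ n → dist x (z i ω) ≤ dist x (z j ω)) ∧
      ζ n ω x = f (z i ω))
    (x : X) (hx : x ∈ measSupport μ) (hxb : ¬ IsFBoundaryPoint f μ x) :
    ∀ᵐ ω ∂P, ∀ᶠ n in atTop, ζ n ω x = f x :=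
  dist_heuristic_pointwise_convergence_general μ f P κ hκ cand hmeas hlaw hindep z hsel ζ hζ x hx
    hxb
end

section
/- Let {z_n} be generated by the selective sampling process S(κ,Φ) where Φ(x,S) = inf{d(x,s) : s ∈ S} is the distance-to-sample-set heuristic and κ satisfies Σ_{n=1}^∞ ρ^{κ(n)} = ∞ for every 0 < ρ ≤ 1. If X is separable and the set of f-boundary points has μ-measure zero, then with probability one, ζ_n(x) → f(x) for μ-almost every x ∈ X (i.e., ζ_n → f in measure). -/
open MeasureTheory ProbabilityTheory Filter Metric

/-!
`z (n + 1)` is one of the `κ (n + 1)` candidates, so it lies in a set `B` whenever all candidates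
do. These events are independent with probabilities `μ B ^ κ (n + 1)`, whose sum diverges, so by
the second Borel–Cantelli lemma they happen infinitely often almost surely. Running over a
countable base, almost surely every open set of positive measure contains a sample; and almost
surely no sample is an `f`-boundary point or lies outside the support, both being null sets. For
`x` of this kind as well, `f = f x` a.e. on some ball around `x`; that ball eventually contains the
nearest sample, whose label is then `f x`.
-/

open scoped ENNReal

section Support

variable {X : Type*} [MetricSpace X] [MeasurableSpace X] {μ : Measure X}

theorem ae_mem_measSupport [SecondCountableTopology X] (μ : Measure X) :
    ∀ᵐ x ∂μ, x ∈ measSupport μ := by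
  refine ae_iff.2 (measure_null_of_locally_null _ fun x hx => ?_)
  obtain ⟨ε, hε, hx0⟩ : ∃ ε > 0, μ (ball x ε) ≤ 0 := by simpa [measSupport] using hx
  exact ⟨ball x ε, mem_nhdsWithin_of_mem_nhds (ball_mem_nhds x hε), nonpos_iff_eq_zero.1 hx0⟩

theorem measure_pos_of_mem_measSupport {x : X} {U : Set X} (hx : x ∈ measSupport μ)
    (hU : IsOpen U) (hxU : x ∈ U) : 0 < μ U := by
  obtain ⟨r, hr, hrU⟩ := Metric.isOpen_iff.1 hU x hxU
  exact (hx r hr).trans_le (measure_mono hrU)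

variable {Y : Type*} {f : X → Y}

theorem not_isFBoundaryPoint_iff {b : X} :
    ¬ IsFBoundaryPoint f μ b ↔ ∃ ε > 0, μ (ball b ε ∩ {x | f x ≠ f b}) = 0 := by
  simp [IsFBoundaryPoint]

theorem apply_eq_of_mem_ball {x z : X} {ε : ℝ} (hx : μ (ball x ε ∩ {w | f w ≠ f x}) = 0)
    (hz : z ∈ ball x ε) (hzs : z ∈ measSupport μ) (hzb : ¬ IsFBoundaryPoint f μ z) :
    f z = f x := by
  obtain ⟨δ, hδ, hz0⟩ := not_isFBoundaryPoint_iff.1 hzb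
  by_contra hne
  set r := min δ (ε - dist z x)
  have hr : 0 < r := lt_min hδ (sub_pos.2 (mem_ball.1 hz))
  -- if `f z ≠ f x`, every point differs in value from `z` or from `x`
  have hcover : ball z r ⊆ (ball z δ ∩ {w | f w ≠ f z}) ∪ (ball x ε ∩ {w | f w ≠ f x}) := by
    intro w hw
    have hwδ : dist w z < δ := (mem_ball.1 hw).trans_le (min_le_left _ _)
    have hwε : dist w x < ε := by
      have := (mem_ball.1 hw).trans_le (min_le_right _ _)
      linarith [dist_triangle w z x]
    by_cases hfw : f w = f z
    · exact Or.inr ⟨hwε, fun h => hne (hfw.symm.trans h)⟩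
    · exact Or.inl ⟨hwδ, hfw⟩
  exact (hzs r hr).ne' (measure_mono_null hcover (measure_union_null hz0 hx))

theorem eventually_nearest_neighbor_eq {z : ℕ → X} {ζ : ℕ → Y} {x : X} {ε : ℝ} {k : ℕ}
    (hζ : ∀ n, 1 ≤ n → ∃ i, 1 ≤ i ∧ i ≤ n ∧
      (∀ j, 1 ≤ j → j ≤ n → dist x (z i) ≤ dist x (z j)) ∧ ζ n = f (z i))
    (hx : μ (ball x ε ∩ {w | f w ≠ f x}) = 0)
    (hgood : ∀ i, 1 ≤ i → z i ∈ measSupport μ ∧ ¬ IsFBoundaryPoint f μ (z i))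
    (hk : 1 ≤ k) (hkx : z k ∈ ball x ε) :
    ∀ᶠ n in atTop, ζ n = f x := by
  filter_upwards [eventually_ge_atTop k] with n hn
  obtain ⟨i, hi, -, hmin, hζn⟩ := hζ n (hk.trans hn)
  have hix : z i ∈ ball x ε := by
    rw [mem_ball, dist_comm] at hkx ⊢
    exact (hmin k hk hn).trans_lt hkx
  exact hζn.trans (apply_eq_of_mem_ball hx hix (hgood i hi).1 (hgood i hi).2)

end Support

theorem not_summable_pow_succ_of_tendsto {κ : ℕ → ℕ} {ρ : ℝ} (hρ : 0 ≤ ρ)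
    (h : Tendsto (fun N => ∑ n ∈ Finset.Icc 1 N, ρ ^ κ n) atTop atTop) :
    ¬ Summable fun n => ρ ^ κ (n + 1) := by
  intro hs
  obtain ⟨N, hN⟩ := (h.eventually_gt_atTop (∑' n, ρ ^ κ n)).exists
  exact hN.not_ge (((summable_nat_add_iff 1).1 hs).sum_le_tsum _ fun n _ => pow_nonneg hρ _)

section Sampling

variable {Ω α : Type*} [MeasurableSpace Ω] [MeasurableSpace α] {P : Measure Ω} {μ : Measure α}
  {k : ℕ → ℕ} {X : (n : ℕ) → Fin (k n) → Ω → α} {z : ℕ → Ω → α}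
  (hindep : iIndepFun (fun p : Σ n, Fin (k n) => X p.1 p.2) P)
  (hmeas : ∀ n i, Measurable (X n i)) (hlaw : ∀ n i, P.map (X n i) = μ)
  (hz : ∀ ω n, ∃ i, z (n + 1) ω = X n i ω)
include hmeas hlaw

include hz in
theorem ae_forall_sample_of_ae {p : α → Prop} (hp : ∀ᵐ a ∂μ, p a) :
    ∀ᵐ ω ∂P, ∀ m, 1 ≤ m → p (z m ω) := by
  have hcand : ∀ᵐ ω ∂P, ∀ n i, p (X n i ω) := by
    simp only [ae_all_iff]
    exact fun n i => ae_of_ae_map (hmeas n i).aemeasurable ((hlaw n i).symm ▸ hp)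
  filter_upwards [hcand] with ω hω m hm
  obtain ⟨n, rfl⟩ : ∃ n, m = n + 1 := ⟨m - 1, by omega⟩
  obtain ⟨i, hi⟩ := hz ω n
  exact hi ▸ hω n i

include hindep

theorem measure_biInter_iInter_preimage {B : Set α} (hB : MeasurableSet B) (s : Finset ℕ) :
    P (⋂ n ∈ s, ⋂ i, X n i ⁻¹' B) = ∏ n ∈ s, μ B ^ k n := by
  have hprod := hindep.meas_biInter (S := s.sigma fun n => (Finset.univ : Finset (Fin (k n))))
    (s := fun p => X p.1 p.2 ⁻¹' B) fun p _ => ⟨B, hB, rfl⟩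
  have hset : (⋂ p ∈ s.sigma fun n => (Finset.univ : Finset (Fin (k n))), X p.1 p.2 ⁻¹' B) =
      ⋂ n ∈ s, ⋂ i, X n i ⁻¹' B := by
    ext ω
    simp only [Set.mem_iInter, Finset.mem_sigma, Finset.mem_univ, and_true, Set.mem_preimage]
    exact ⟨fun h n hn i => h ⟨n, i⟩ hn, fun h p hp => h p.1 hp p.2⟩
  rw [← hset, hprod, Finset.prod_sigma]
  refine Finset.prod_congr rfl fun n _ => ?_
  simp [← Measure.map_apply (hmeas n _) hB, hlaw]

theorem measure_iInter_preimage {B : Set α} (hB : MeasurableSet B) (n : ℕ) :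
    P (⋂ i, X n i ⁻¹' B) = μ B ^ k n := by
  simpa using measure_biInter_iInter_preimage hindep hmeas hlaw hB {n}

theorem iIndepSet_iInter_preimage_s1 {B : Set α} (hB : MeasurableSet B) :
    iIndepSet (fun n => ⋂ i, X n i ⁻¹' B) P := by
  rw [iIndepSet_iff_meas_biInter fun n => MeasurableSet.iInter fun i => hmeas n i hB]
  intro s
  simp only [measure_biInter_iInter_preimage hindep hmeas hlaw hB,
    measure_iInter_preimage hindep hmeas hlaw hB]

theorem ae_frequently_forall_mem [IsProbabilityMeasure P] {B : Set α} (hB : MeasurableSet B)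
    (hdiv : ¬ Summable fun n => (μ B).toReal ^ k n) :
    ∀ᵐ ω ∂P, ∃ᶠ n in atTop, ∀ i, X n i ω ∈ B := by
  have hE : ∀ n, MeasurableSet (⋂ i, X n i ⁻¹' B) := fun n =>
    MeasurableSet.iInter fun i => hmeas n i hB
  have htop : ∑' n, P (⋂ i, X n i ⁻¹' B) = ∞ := by
    by_contra h
    refine hdiv ?_
    simpa [measure_iInter_preimage hindep hmeas hlaw hB, ENNReal.toReal_pow] using
      ENNReal.summable_toReal h
  have hlimsup : ∀ᵐ ω ∂P, ω ∈ limsup (fun n => ⋂ i, X n i ⁻¹' B) atTop := by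
    refine (ae_iff_measure_eq (MeasurableSet.measurableSet_limsup hE).nullMeasurableSet).2 ?_
    rw [measure_univ]
    exact measure_limsup_eq_one hE (iIndepSet_iInter_preimage_s1 hindep hmeas hlaw hB) htop
  filter_upwards [hlimsup] with ω hω
  simpa using mem_limsup_iff_frequently_mem.1 hω

include hz in
theorem ae_forall_exists_sample_mem [IsProbabilityMeasure P] [IsProbabilityMeasure μ]
    (hdiv : ∀ ρ : ℝ, 0 < ρ → ρ ≤ 1 → ¬ Summable fun n => ρ ^ k n)
    {𝒰 : Set (Set α)} (h𝒰 : 𝒰.Countable) (h𝒰meas : ∀ U ∈ 𝒰, MeasurableSet U) :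
    ∀ᵐ ω ∂P, ∀ U ∈ 𝒰, 0 < μ U → ∃ m, 1 ≤ m ∧ z m ω ∈ U := by
  refine (ae_ball_iff h𝒰).2 fun U hU => ?_
  by_cases hpos : 0 < μ U
  · have hρ : ¬ Summable fun n => (μ U).toReal ^ k n :=
      hdiv _ (ENNReal.toReal_pos hpos.ne' (measure_ne_top μ U)) measureReal_le_one
    filter_upwards [ae_frequently_forall_mem hindep hmeas hlaw (h𝒰meas U hU) hρ] with ω hω _
    obtain ⟨n, hn⟩ := hω.exists
    obtain ⟨i, hi⟩ := hz ω n
    exact ⟨n + 1, by omega, hi ▸ hn i⟩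
  · exact Eventually.of_forall fun _ h => absurd h hpos

end Sampling

theorem dist_heuristic_convergence_in_measure_general
    {X : Type*} [MetricSpace X] [TopologicalSpace.SeparableSpace X]
    [MeasurableSpace X] [BorelSpace X]
    {Y : Type*}
    (μ : Measure X) [IsProbabilityMeasure μ] (f : X → Y)
    {Ω : Type*} [MeasurableSpace Ω] (P : Measure Ω) [IsProbabilityMeasure P]
    -- the candidate-count function κ : ℕ⁺ → ℕ⁺ (κ (n+1) candidates at step n+1)
    (κ : ℕ → ℕ)
    (hκ : ∀ ρ : ℝ, 0 < ρ → ρ ≤ 1 →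
      Tendsto (fun N => ∑ n ∈ Finset.Icc 1 N, ρ ^ κ n) atTop atTop)
    -- at step n+1, κ(n+1) candidates are drawn, iid with law μ
    (cand : (n : ℕ) → Fin (κ (n + 1)) → Ω → X)
    (hmeas : ∀ n i, Measurable (cand n i))
    (hlaw : ∀ n i, P.map (cand n i) = μ)
    (hindep : iIndepFun
      (fun p : Σ n : ℕ, Fin (κ (n + 1)) => cand p.1 p.2) P)
    -- the sample z_{n+1} is a candidate maximizing Φ(·, Z_n) = d(·, Z_n)
    (z : ℕ → Ω → X)
    (hsel : ∀ ω n, ∃ i : Fin (κ (n + 1)), z (n + 1) ω = cand n i ω ∧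
      ∀ j : Fin (κ (n + 1)),
        infDist (cand n j ω) (sampleSet z n ω) ≤
          infDist (cand n i ω) (sampleSet z n ω))
    -- ζ_n is a nearest neighbor prediction over Z_n (ties broken arbitrarily)
    (ζ : ℕ → Ω → X → Y)
    (hζ : ∀ ω x n, 1 ≤ n → ∃ i, 1 ≤ i ∧ i ≤ n ∧
      (∀ j, 1 ≤ j → j ≤ n → dist x (z i ω) ≤ dist x (z j ω)) ∧
      ζ n ω x = f (z i ω))
    (hbdry : μ {b | IsFBoundaryPoint f μ b} = 0) :
    ∀ᵐ ω ∂P, ∀ᵐ x ∂μ, ∀ᶠ n in atTop, ζ n ω x = f x := by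
  have hgood : ∀ᵐ x ∂μ, x ∈ measSupport μ ∧ ¬ IsFBoundaryPoint f μ x :=
    (ae_mem_measSupport μ).and (ae_iff.2 (by simpa using hbdry))
  have hz : ∀ ω n, ∃ i, z (n + 1) ω = cand n i ω := fun ω n => (hsel ω n).imp fun _ h => h.1
  have hdiv : ∀ ρ : ℝ, 0 < ρ → ρ ≤ 1 → ¬ Summable fun n => ρ ^ κ (n + 1) :=
    fun ρ h0 h1 => not_summable_pow_succ_of_tendsto h0.le (hκ ρ h0 h1)
  filter_upwards [ae_forall_sample_of_ae hmeas hlaw hz hgood,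
    ae_forall_exists_sample_mem hindep hmeas hlaw hz hdiv
      (TopologicalSpace.countable_countableBasis X)
      fun U hU => (TopologicalSpace.isOpen_of_mem_countableBasis hU).measurableSet]
    with ω hωgood hωhit
  filter_upwards [hgood] with x ⟨hxs, hxb⟩
  obtain ⟨ε, hε, hxε⟩ := not_isFBoundaryPoint_iff.1 hxb
  obtain ⟨U, hU, hxU, hUε⟩ :=
    (TopologicalSpace.isBasis_countableBasis X).mem_nhds_iff.1 (ball_mem_nhds x hε)
  obtain ⟨m, hm, hmU⟩ := hωhit U hU
    (measure_pos_of_mem_measSupport hxs (TopologicalSpace.isOpen_of_mem_countableBasis hU) hxU)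
  exact eventually_nearest_neighbor_eq (hζ ω x) hxε hωgood hm (hUε hmU)

/-- **Convergence in measure of the distance-to-sample-set heuristic.**
If the samples are generated by the selective sampling process `S(κ, Φ)` with
`Φ(x, S) = d(x, S)` and `∑ ρ^{κ(n)} = ∞` for all `0 < ρ ≤ 1`, `X` is separable,
and the `f`-boundary has measure zero, then with probability one the nearest
neighbor predictions converge to `f` μ-almost everywhere (i.e. in measure). -/
theorem dist_heuristic_convergence_in_measure
    {X : Type*} [MetricSpace X] [TopologicalSpace.SeparableSpace X]
    [MeasurableSpace X] [BorelSpace X]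
    {Y : Type*} [Countable Y]
    (μ : Measure X) [IsProbabilityMeasure μ] (f : X → Y)
    {Ω : Type*} [MeasurableSpace Ω] (P : Measure Ω) [IsProbabilityMeasure P]
    -- the candidate-count function κ : ℕ⁺ → ℕ⁺ (κ (n+1) candidates at step n+1)
    (κ : ℕ → ℕ) (hκpos : ∀ n, 1 ≤ κ n)
    (hκ : ∀ ρ : ℝ, 0 < ρ → ρ ≤ 1 →
      Tendsto (fun N => ∑ n ∈ Finset.Icc 1 N, ρ ^ κ n) atTop atTop)
    -- at step n+1, κ(n+1) candidates are drawn, iid with law μ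
    (cand : (n : ℕ) → Fin (κ (n + 1)) → Ω → X)
    (hmeas : ∀ n i, Measurable (cand n i))
    (hlaw : ∀ n i, P.map (cand n i) = μ)
    (hindep : iIndepFun
      (fun p : Σ n : ℕ, Fin (κ (n + 1)) => cand p.1 p.2) P)
    -- the sample z_{n+1} is a candidate maximizing Φ(·, Z_n) = d(·, Z_n)
    (z : ℕ → Ω → X)
    (hsel : ∀ ω n, ∃ i : Fin (κ (n + 1)), z (n + 1) ω = cand n i ω ∧
      ∀ j : Fin (κ (n + 1)),
        infDist (cand n j ω) (sampleSet z n ω) ≤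
          infDist (cand n i ω) (sampleSet z n ω))
    -- ζ_n is a nearest neighbor prediction over Z_n (ties broken arbitrarily)
    (ζ : ℕ → Ω → X → Y)
    (hζ : ∀ ω x n, 1 ≤ n → ∃ i, 1 ≤ i ∧ i ≤ n ∧
      (∀ j, 1 ≤ j → j ≤ n → dist x (z i ω) ≤ dist x (z j ω)) ∧
      ζ n ω x = f (z i ω))
    (hbdry : μ {b | IsFBoundaryPoint f μ b} = 0) :
    ∀ᵐ ω ∂P, ∀ᵐ x ∂μ, ∀ᶠ n in atTop, ζ n ω x = f x :=
  dist_heuristic_convergence_in_measure_general μ f P κ hκ cand hmeas hlaw hindep z hsel ζ hζ hbdry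
end

section
/- Let S ⊆ X and let x ∈ X \ S. If v is a Voronoi neighbor of x with respect to S, then there exists ε > 0 such that for all x' in the open ball B_ε(x), v is a Voronoi neighbor of x' with respect to S. Furthermore, if v is a nearest neighbor of x in S (i.e., d(x,v) ≤ d(x,s) for all s ∈ S), then this conclusion holds for every ε with 0 < ε ≤ d(x,v). -/
open Metric

/-- `v` is a Voronoi neighbor of `x` with respect to `S` iff `v ∈ S` and there
is a "certifying" point `c` with `d(x,c) < d(v,c) ≤ d(s,c)` for all `s ∈ S`. -/
def IsVoronoiNbr {X : Type*} [MetricSpace X] (S : Set X) (x v : X) : Prop :=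
  v ∈ S ∧ ∃ c : X, dist x c < dist v c ∧ ∀ s ∈ S, dist v c ≤ dist s c

section

variable {X : Type*} [MetricSpace X] {S : Set X} {x v : X}

/-- A certificate `c` for `x` still certifies every point closer to `c` than `v` is. -/
theorem IsVoronoiNbr.exists_ball (hv : IsVoronoiNbr S x v) :
    ∃ ε > 0, ∀ x' ∈ ball x ε, IsVoronoiNbr S x' v := by
  obtain ⟨hvS, c, hxc, hvc⟩ := hv
  refine ⟨dist v c - dist x c, sub_pos.mpr hxc, fun x' hx' => ⟨hvS, c, ?_, hvc⟩⟩
  calc dist x' c ≤ dist x' x + dist x c := dist_triangle x' x c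
    _ < dist v c := by rw [mem_ball] at hx'; linarith

/-- For a nearest neighbor `v` of `x`, the point `x` itself is a certificate. -/
theorem isVoronoiNbr_of_mem_ball_of_forall_dist_le (hvS : v ∈ S)
    (hnear : ∀ s ∈ S, dist x v ≤ dist x s) {x' : X} (hx' : x' ∈ ball x (dist x v)) :
    IsVoronoiNbr S x' v := by
  refine ⟨hvS, x, ?_, fun s hs => ?_⟩
  · simpa only [dist_comm v x] using mem_ball.mp hx'
  · simpa only [dist_comm _ x] using hnear s hs

end

theorem voronoiNbr_stable_general
    {X : Type*} [MetricSpace X] (S : Set X) (x : X) (v : X)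
    (hv : IsVoronoiNbr S x v) :
    (∃ ε > 0, ∀ x' ∈ ball x ε, IsVoronoiNbr S x' v) ∧
    ((∀ s ∈ S, dist x v ≤ dist x s) →
      ∀ ε : ℝ, 0 < ε → ε ≤ dist x v → ∀ x' ∈ ball x ε, IsVoronoiNbr S x' v) :=
  ⟨hv.exists_ball, fun hnear _ _ hε _ hx' =>
    isVoronoiNbr_of_mem_ball_of_forall_dist_le hv.1 hnear (ball_subset_ball hε hx')⟩

/-- **Stability of Voronoi neighbors.** If `v` is a Voronoi neighbor of
`x ∉ S` with respect to `S`, then `v` remains a Voronoi neighbor of every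
point of some open ball about `x`; moreover if `v` is a nearest neighbor of
`x` in `S`, this holds for every radius `0 < ε ≤ d(x,v)`. -/
theorem voronoiNbr_stable
    {X : Type*} [MetricSpace X] (S : Set X) (x : X) (hx : x ∉ S) (v : X)
    (hv : IsVoronoiNbr S x v) :
    (∃ ε > 0, ∀ x' ∈ ball x ε, IsVoronoiNbr S x' v) ∧
    ((∀ s ∈ S, dist x v ≤ dist x s) →
      ∀ ε : ℝ, 0 < ε → ε ≤ dist x v → ∀ x' ∈ ball x ε, IsVoronoiNbr S x' v) :=
  voronoiNbr_stable_general S x v hv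
end

section
/- Let {z_n} be generated by the selective sampling process S(κ,Φ) where κ satisfies Σ_{n=1}^∞ ρ^{κ(n)} = ∞ for every 0 < ρ ≤ 1, and Φ is the non-modal count heuristic Φ(x,S) = |V_S(x)| − modefreq_f(V_S(x)) with V_S(x) the set of Voronoi neighbors of x with respect to S. If X is separable, the set of f-boundary points has μ-measure zero, and the union of all f-contiguous components of μ-measure zero itself has μ-measure zero, then with probability one, ζ_n(x) → f(x) for μ-almost every x ∈ X (i.e., ζ_n → f in measure). -/
open MeasureTheory ProbabilityTheory Filter Metric

/-- The set of Voronoi neighbors of `x` with respect to `S`. -/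
def voronoiNbrs {X : Type*} [MetricSpace X] (S : Set X) (x : X) : Set X :=
  {v ∈ S | ∃ c : X, dist x c < dist v c ∧ ∀ s ∈ S, dist v c ≤ dist s c}

/-- `modefreq_f(A)`: the frequency of the mode of `A` under `f`, i.e. the
maximum over `y` of the number of elements of `A` with `f`-value `y`. -/
noncomputable def modeFreq {X Y : Type*} (f : X → Y) (A : Set X) : ℕ :=
  ⨆ y : Y, (A ∩ f ⁻¹' {y}).ncard

/-- The non-modal count heuristic with Voronoi neighbors:
`Φ(x,S) = |V_S(x)| − modefreq_f(V_S(x))`. -/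
noncomputable def nmcVoronoi {X Y : Type*} [MetricSpace X] (f : X → Y)
    (x : X) (S : Set X) : ℤ :=
  ((voronoiNbrs S x).ncard : ℤ) - modeFreq f (voronoiNbrs S x)

/-- `R` is `f`-contiguous: `R` is connected, `f` is constant on `R`, `R` lies in
the support of `μ`, and `R` contains no `f`-boundary point. -/
def IsFContiguous {X Y : Type*} [MetricSpace X] [MeasurableSpace X]
    (f : X → Y) (μ : Measure X) (R : Set X) : Prop :=
  IsPreconnected R ∧ (∀ a ∈ R, ∀ b ∈ R, f a = f b) ∧
    R ⊆ measSupport μ ∧ ∀ b ∈ R, ¬ IsFBoundaryPoint f μ b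

/-- An `f`-contiguous component: a maximal `f`-contiguous set. -/
def IsFContiguousComponent {X Y : Type*} [MetricSpace X] [MeasurableSpace X]
    (f : X → Y) (μ : Measure X) (C : Set X) : Prop :=
  IsFContiguous f μ C ∧ ∀ R : Set X, IsFContiguous f μ R → C ⊆ R → R = C

/-!
Since `∑ ρ ^ κ n = ∞`, the second Borel–Cantelli lemma shows that almost surely every basic open
set of positive measure receives, at some step, all the candidates of that step, and hence the
selected sample. A `μ`-typical `x` lies in the support of `μ` and is not an `f`-boundary point, so
some ball around `x` is labelled `f x` up to a null set. Once a sample falls into that ball, so does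
every later nearest neighbour of `x`, and its label is `f x` unless it is an outlier: a point whose
label differs from the almost-everywhere label of one of its neighbourhoods. The outliers form a
null set (second countability), so almost surely no candidate is one.
-/

open scoped NNReal ENNReal Topology

theorem tsum_pow_comp_succ_eq_top {κ : ℕ → ℕ}
    (hκ : ∀ ρ : ℝ, 0 < ρ → ρ ≤ 1 →
      Tendsto (fun N => ∑ n ∈ Finset.Icc 1 N, ρ ^ κ n) atTop atTop)
    {p : ℝ≥0∞} (hp0 : 0 < p) (hp1 : p ≤ 1) : ∑' n, p ^ κ (n + 1) = ∞ := by
  lift p to ℝ≥0 using ne_top_of_le_ne_top ENNReal.one_ne_top hp1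
  simp_rw [← ENNReal.coe_pow, ENNReal.tsum_coe_eq_top_iff_not_summable_coe, NNReal.coe_pow,
    summable_nat_add_iff 1 (f := fun n => (p : ℝ) ^ κ n)]
  intro hsum
  obtain ⟨N, hN⟩ := ((hκ p (by exact_mod_cast hp0) (by exact_mod_cast hp1)).eventually_gt_atTop
    (∑' n, (p : ℝ) ^ κ n)).exists
  exact hN.not_ge (hsum.sum_le_tsum _ fun n _ => by positivity)

section Sampling

variable {X Ω : Type*} [MeasurableSpace X] [MeasurableSpace Ω] {μ : Measure X} {P : Measure Ω}
  {k : ℕ → ℕ} {cand : (n : ℕ) → Fin (k n) → Ω → X}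

theorem ae_frequently_forall_mem_of_tsum_eq_top_s5 [IsProbabilityMeasure P]
    (hmp : ∀ n i, MeasurePreserving (cand n i) P μ)
    (hindep : iIndepFun (fun p : Σ n, Fin (k n) => cand p.1 p.2) P)
    {A : Set X} (hA : MeasurableSet A) (hdiv : ∑' n, μ A ^ k n = ∞) :
    ∀ᵐ ω ∂P, ∃ᶠ n in atTop, ∀ i, cand n i ω ∈ A := by
  set E : ℕ → Set Ω := fun n => ⋂ i, cand n i ⁻¹' A
  have hE : ∀ n, MeasurableSet (E n) := fun n => .iInter fun i => (hmp n i).measurable hA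
  have hprod : ∀ S : Finset ℕ, P (⋂ n ∈ S, E n) = ∏ n ∈ S, μ A ^ k n := by
    intro S
    have hsigma : ⋂ n ∈ S, E n = ⋂ p ∈ S.sigma fun n => (Finset.univ : Finset (Fin (k n))),
        (fun ω => cand p.1 p.2 ω) ⁻¹' A := by
      ext ω
      simp only [E, Set.mem_iInter, Set.mem_preimage, Finset.mem_sigma, Finset.mem_univ, and_true,
        Sigma.forall]
      exact forall_congr' fun n => forall_comm
    rw [hsigma, hindep.meas_biInter fun p _ => ⟨A, hA, rfl⟩, Finset.prod_sigma]
    refine Finset.prod_congr rfl fun n _ => ?_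
    simp [(hmp n _).measure_preimage hA.nullMeasurableSet]
  have hPE : ∀ n, P (E n) = μ A ^ k n := fun n => by simpa using hprod {n}
  have hindepE : iIndepSet E P := by
    rw [iIndepSet_iff_meas_biInter hE]
    intro S
    simp only [hprod, hPE]
  have hlimsup : P (limsup E atTop) = 1 :=
    measure_limsup_eq_one hE hindepE (by simpa only [hPE] using hdiv)
  have hae : ∀ᵐ ω ∂P, ω ∈ limsup E atTop := by
    rwa [ae_mem_iff_measure_eq (MeasurableSet.measurableSet_limsup hE).nullMeasurableSet,
      measure_univ]
  filter_upwards [hae] with ω hω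
  simpa [E] using mem_limsup_iff_frequently_mem.1 hω

theorem ae_forall_mem_support_frequently_forall_mem [TopologicalSpace X]
    [SecondCountableTopology X] [OpensMeasurableSpace X]
    [IsProbabilityMeasure μ] [IsProbabilityMeasure P]
    (hmp : ∀ n i, MeasurePreserving (cand n i) P μ)
    (hindep : iIndepFun (fun p : Σ n, Fin (k n) => cand p.1 p.2) P)
    (hdiv : ∀ p : ℝ≥0∞, 0 < p → p ≤ 1 → ∑' n, p ^ k n = ∞) :
    ∀ᵐ ω ∂P, ∀ x ∈ μ.support, ∀ V ∈ 𝓝 x, ∃ᶠ n in atTop, ∀ i, cand n i ω ∈ V := by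
  have hbasis := TopologicalSpace.isBasis_countableBasis X
  have hhit : ∀ᵐ ω ∂P, ∀ U ∈ TopologicalSpace.countableBasis X, 0 < μ U →
      ∃ᶠ n in atTop, ∀ i, cand n i ω ∈ U := by
    refine (ae_ball_iff (TopologicalSpace.countable_countableBasis X)).2 fun U hU => ?_
    by_cases hpos : 0 < μ U
    · have hUm := (hbasis.isOpen hU).measurableSet
      filter_upwards [ae_frequently_forall_mem_of_tsum_eq_top_s5 hmp hindep hUm
        (hdiv _ hpos prob_le_one)] with ω hω _ using hω
    · exact .of_forall fun ω h => absurd h hpos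
  filter_upwards [hhit] with ω hω x hx V hV
  obtain ⟨U, hU, hxU, hUV⟩ := hbasis.mem_nhds_iff.1 hV
  refine (hω U hU ?_).mono fun n hn i => hUV (hn i)
  exact (Measure.mem_support_iff_forall x).1 hx U ((hbasis.isOpen hU).mem_nhds hxU)

end Sampling

section Outliers

variable {X Y : Type*} [TopologicalSpace X] [MeasurableSpace X]

def outlierSet (f : X → Y) (μ : Measure X) : Set X :=
  {p | ∃ y, f p ≠ y ∧ ∃ U ∈ 𝓝 p, μ (U ∩ {q | f q ≠ y}) = 0}

theorem measure_outlierSet [SecondCountableTopology X] [Countable Y] (f : X → Y)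
    (μ : Measure X) : μ (outlierSet f μ) = 0 := by
  have hunion : outlierSet f μ =
      ⋃ y, {p | f p ≠ y ∧ ∃ U ∈ 𝓝 p, μ (U ∩ {q | f q ≠ y}) = 0} := by
    ext p
    simp [outlierSet]
  rw [hunion]
  refine measure_iUnion_null fun y => measure_null_of_locally_null _ ?_
  rintro p ⟨-, U, hU, hUnull⟩
  refine ⟨_, inter_mem_nhdsWithin _ hU, measure_mono_null ?_ hUnull⟩
  exact fun q hq => ⟨hq.2, hq.1.1⟩

theorem eq_of_mem_of_notMem_outlierSet {f : X → Y} {μ : Measure X} {U : Set X} {y : Y}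
    (hU : IsOpen U) (hUnull : μ (U ∩ {q | f q ≠ y}) = 0) {p : X} (hpU : p ∈ U)
    (hp : p ∉ outlierSet f μ) : f p = y := by
  by_contra hne
  exact hp ⟨y, hne, U, hU.mem_nhds hpU, hUnull⟩

end Outliers

theorem exists_measure_ball_inter_ne_eq_zero_of_not_isFBoundaryPoint {X Y : Type*}
    [MetricSpace X] [MeasurableSpace X] {f : X → Y} {μ : Measure X} {x : X}
    (hx : ¬ IsFBoundaryPoint f μ x) :
    ∃ ε > 0, μ (ball x ε ∩ {q | f q ≠ f x}) = 0 := by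
  simpa [IsFBoundaryPoint] using hx

theorem nmc_voronoi_convergence_in_measure_general
    {X : Type*} [MetricSpace X] [TopologicalSpace.SeparableSpace X]
    [MeasurableSpace X] [BorelSpace X]
    {Y : Type*} [Countable Y]
    (μ : Measure X) [IsProbabilityMeasure μ] (f : X → Y)
    {Ω : Type*} [MeasurableSpace Ω] (P : Measure Ω) [IsProbabilityMeasure P]
    -- the candidate-count function κ : ℕ⁺ → ℕ⁺ (κ (n+1) candidates at step n+1)
    (κ : ℕ → ℕ)
    (hκ : ∀ ρ : ℝ, 0 < ρ → ρ ≤ 1 →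
      Tendsto (fun N => ∑ n ∈ Finset.Icc 1 N, ρ ^ κ n) atTop atTop)
    -- at step n+1, κ(n+1) candidates are drawn, iid with law μ
    (cand : (n : ℕ) → Fin (κ (n + 1)) → Ω → X)
    (hmeas : ∀ n i, Measurable (cand n i))
    (hlaw : ∀ n i, P.map (cand n i) = μ)
    (hindep : iIndepFun
      (m := fun _ : Σ n : ℕ, Fin (κ (n + 1)) => (inferInstance : MeasurableSpace X))
      (fun p => cand p.1 p.2) P)
    -- the sample z_{n+1} is a candidate maximizing the non-modal count Φ(·, Z_n)
    (z : ℕ → Ω → X)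
    (hsel : ∀ ω n, ∃ i : Fin (κ (n + 1)), z (n + 1) ω = cand n i ω ∧
      ∀ j : Fin (κ (n + 1)),
        nmcVoronoi f (cand n j ω) (sampleSet z n ω) ≤
          nmcVoronoi f (cand n i ω) (sampleSet z n ω))
    -- ζ_n is a nearest neighbor prediction over Z_n (ties broken arbitrarily)
    (ζ : ℕ → Ω → X → Y)
    (hζ : ∀ ω x n, 1 ≤ n → ∃ i, 1 ≤ i ∧ i ≤ n ∧
      (∀ j, 1 ≤ j → j ≤ n → dist x (z i ω) ≤ dist x (z j ω)) ∧
      ζ n ω x = f (z i ω))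
    (hbdry : μ {b | IsFBoundaryPoint f μ b} = 0) :
    ∀ᵐ ω ∂P, ∀ᵐ x ∂μ, ∀ᶠ n in atTop, ζ n ω x = f x := by
  have hmp : ∀ n i, MeasurePreserving (cand n i) P μ := fun n i => ⟨hmeas n i, hlaw n i⟩
  have hhit := ae_forall_mem_support_frequently_forall_mem hmp hindep
    fun p hp0 hp1 => tsum_pow_comp_succ_eq_top hκ hp0 hp1
  have havoid : ∀ᵐ ω ∂P, ∀ n i, cand n i ω ∉ outlierSet f μ :=
    ae_all_iff.2 fun n => ae_all_iff.2 fun i => (hmp n i).quasiMeasurePreserving.ae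
      (measure_eq_zero_iff_ae_notMem.1 (measure_outlierSet f μ))
  filter_upwards [hhit, havoid] with ω hωhit hωavoid
  have hzavoid : ∀ k, 1 ≤ k → z k ω ∉ outlierSet f μ := by
    intro k hk
    obtain ⟨n, rfl⟩ := Nat.exists_eq_add_of_le' hk
    obtain ⟨i, hi, -⟩ := hsel ω n
    exact hi ▸ hωavoid n i
  filter_upwards [Measure.support_mem_ae, measure_eq_zero_iff_ae_notMem.1 hbdry]
    with x hxsupp hxbdry
  obtain ⟨ε, hε, hεnull⟩ :=
    exists_measure_ball_inter_ne_eq_zero_of_not_isFBoundaryPoint hxbdry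
  obtain ⟨n₀, hn₀⟩ := (hωhit x hxsupp (ball x ε) (ball_mem_nhds x hε)).exists
  obtain ⟨i₀, hi₀, -⟩ := hsel ω n₀
  filter_upwards [eventually_ge_atTop (n₀ + 1)] with n hn
  obtain ⟨i, hi1, -, hnearest, hζi⟩ := hζ ω x n (by omega)
  have hzi : z i ω ∈ ball x ε := by
    rw [mem_ball']
    calc dist x (z i ω) ≤ dist x (z (n₀ + 1) ω) := hnearest _ (by omega) hn
      _ < ε := by rw [hi₀, ← mem_ball']; exact hn₀ i₀
  rw [hζi, eq_of_mem_of_notMem_outlierSet isOpen_ball hεnull hzi (hzavoid i hi1)]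

/-- **Convergence in measure of the non-modal count heuristic (Voronoi
neighbors).** If `X` is separable, the `f`-boundary has measure zero, and the
union of all `f`-contiguous components of measure zero itself has measure zero,
then with probability one the nearest neighbor predictions converge to `f`
μ-almost everywhere (i.e. in measure). -/
theorem nmc_voronoi_convergence_in_measure
    {X : Type*} [MetricSpace X] [TopologicalSpace.SeparableSpace X]
    [MeasurableSpace X] [BorelSpace X]
    {Y : Type*} [Countable Y]
    (μ : Measure X) [IsProbabilityMeasure μ] (f : X → Y)
    {Ω : Type*} [MeasurableSpace Ω] (P : Measure Ω) [IsProbabilityMeasure P]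
    -- the candidate-count function κ : ℕ⁺ → ℕ⁺ (κ (n+1) candidates at step n+1)
    (κ : ℕ → ℕ) (hκpos : ∀ n, 1 ≤ κ n)
    (hκ : ∀ ρ : ℝ, 0 < ρ → ρ ≤ 1 →
      Tendsto (fun N => ∑ n ∈ Finset.Icc 1 N, ρ ^ κ n) atTop atTop)
    -- at step n+1, κ(n+1) candidates are drawn, iid with law μ
    (cand : (n : ℕ) → Fin (κ (n + 1)) → Ω → X)
    (hmeas : ∀ n i, Measurable (cand n i))
    (hlaw : ∀ n i, P.map (cand n i) = μ)
    (hindep : iIndepFun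
      (m := fun _ : Σ n : ℕ, Fin (κ (n + 1)) => (inferInstance : MeasurableSpace X))
      (fun p => cand p.1 p.2) P)
    -- the sample z_{n+1} is a candidate maximizing the non-modal count Φ(·, Z_n)
    (z : ℕ → Ω → X)
    (hsel : ∀ ω n, ∃ i : Fin (κ (n + 1)), z (n + 1) ω = cand n i ω ∧
      ∀ j : Fin (κ (n + 1)),
        nmcVoronoi f (cand n j ω) (sampleSet z n ω) ≤
          nmcVoronoi f (cand n i ω) (sampleSet z n ω))
    -- ζ_n is a nearest neighbor prediction over Z_n (ties broken arbitrarily)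
    (ζ : ℕ → Ω → X → Y)
    (hζ : ∀ ω x n, 1 ≤ n → ∃ i, 1 ≤ i ∧ i ≤ n ∧
      (∀ j, 1 ≤ j → j ≤ n → dist x (z i ω) ≤ dist x (z j ω)) ∧
      ζ n ω x = f (z i ω))
    (hbdry : μ {b | IsFBoundaryPoint f μ b} = 0)
    (hnull : μ (⋃ C ∈ {C : Set X | IsFContiguousComponent f μ C ∧ μ C = 0}, C) = 0) :
    ∀ᵐ ω ∂P, ∀ᵐ x ∂μ, ∀ᶠ n in atTop, ζ n ω x = f x :=
  nmc_voronoi_convergence_in_measure_general μ f P κ hκ cand hmeas hlaw hindep z hsel ζ hζ hbdry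
end

section
/- Fix an integer K ≥ 2. Let {z_n} be generated by the selective sampling process S(κ,Φ) where κ satisfies Σ_{n=1}^∞ ρ^{κ(n)} = ∞ for every 0 < ρ ≤ 1, and Φ is the non-modal count heuristic Φ(x,S) = |V_S(x)| − modefreq_f(V_S(x)) with V_S(x) the K-nearest neighbors of x with respect to S. If X is separable, the set of f-boundary points has μ-measure zero, and the union of all f-contiguous components of μ-measure zero itself has μ-measure zero, then with probability one, ζ_n(x) → f(x) for μ-almost every x ∈ X (i.e., ζ_n → f in measure). -/
/-!
Let `B` have positive measure. Since `∑ μ(B)^κ(n) = ∞`, the second Borel–Cantelli lemma shows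
that almost surely, infinitely often all `κ(n+1)` candidates of a step lie in `B`, and then so does
the selected sample, whatever the heuristic. Over a countable basis this makes the samples come
arbitrarily close to every point of the support. Almost surely, also, no candidate (hence no
sample) falls into any of the countably many null sets `V ∩ {f ≠ y}` with `V` basic. A point `x`
of the support that is not an `f`-boundary point has a basic neighbourhood `W` in which the other
labels are null; once a sample enters a ball around `x` inside `W`, the nearest neighbour of `x`
lies in `W` and carries the label `f x`.
-/

open MeasureTheory ProbabilityTheory Filter Metric

/-- `V` is a set of `K` nearest neighbors of `x` in `S`: a `K`-element subset of
`S` minimizing distance to `x`, and among all such, minimizing `modefreq_f`. -/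
def IsKNNSet {X Y : Type*} [MetricSpace X] (f : X → Y) (K : ℕ)
    (S : Set X) (x : X) (V : Finset X) : Prop :=
  V.card = K ∧ ↑V ⊆ S ∧
    (∀ v ∈ V, ∀ s ∈ S, s ∉ V → dist x v ≤ dist x s) ∧
    ∀ W : Finset X, W.card = K → ↑W ⊆ S →
      (∀ v ∈ W, ∀ s ∈ S, s ∉ W → dist x v ≤ dist x s) →
      modeFreq f (↑V : Set X) ≤ modeFreq f (↑W : Set X)

open scoped Classical in
/-- The non-modal count heuristic with `K`-nearest neighbors:
`Φ(x,S) = |V_S(x)| − modefreq_f(V_S(x))`, where `V_S(x)` is a `K`-set of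
nearest neighbors of `x` minimizing `modefreq_f` (so the value is
`K - min modefreq`), and `V_S(x) = ∅` when `x ∈ S`. -/
noncomputable def nmcKNN {X Y : Type*} [MetricSpace X] (f : X → Y) (K : ℕ)
    (x : X) (S : Set X) : ℤ :=
  if x ∈ S then 0
  else (K : ℤ) - sInf {m : ℕ | ∃ V : Finset X, IsKNNSet f K S x V ∧
    modeFreq f (↑V : Set X) = m}

open scoped ENNReal

lemma ENNReal.tsum_succ_eq_top_of_tendsto_sum_Icc {a : ℕ → ℝ≥0∞} (ha : ∀ n, a n ≠ ∞)
    (h : Tendsto (fun N => ∑ n ∈ Finset.Icc 1 N, (a n).toReal) atTop atTop) :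
    ∑' n, a (n + 1) = ∞ := by
  have hpartial : (fun N => ∑ n ∈ Finset.range N, a (n + 1)) =
      fun N => ENNReal.ofReal (∑ n ∈ Finset.Icc 1 N, (a n).toReal) := by
    funext N
    rw [ENNReal.ofReal_sum_of_nonneg fun _ _ => ENNReal.toReal_nonneg, Finset.range_eq_Ico,
      Finset.sum_Ico_add', zero_add, Finset.Ico_add_one_right_eq_Icc]
    simp only [ENNReal.ofReal_toReal (ha _)]
  refine tendsto_nhds_unique (ENNReal.tendsto_nat_tsum _) ?_
  rw [hpartial]
  exact ENNReal.tendsto_ofReal_atTop.comp h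

section Candidates

variable {Ω α : Type*} [MeasurableSpace Ω] [MeasurableSpace α] {P : Measure Ω} {μ : Measure α}
  {ι : ℕ → Type*} {ξ : (n : ℕ) → ι n → Ω → α} {B : Set α}

lemma measure_preimage_eq_of_map_eq {X : Ω → α} (hX : Measurable X) (hlaw : P.map X = μ)
    (hB : MeasurableSet B) : P (X ⁻¹' B) = μ B := by
  rw [← hlaw, Measure.map_apply hX hB]

lemma measure_biInter_iInter_preimage_s9 [∀ n, Fintype (ι n)] (hmeas : ∀ n i, Measurable (ξ n i))
    (hlaw : ∀ n i, P.map (ξ n i) = μ) (hindep : iIndepFun (fun p : Σ n, ι n => ξ p.1 p.2) P)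
    (hB : MeasurableSet B) (t : Finset ℕ) :
    P (⋂ n ∈ t, ⋂ i, ξ n i ⁻¹' B) = ∏ n ∈ t, μ B ^ Fintype.card (ι n) := by
  have hset : ⋂ n ∈ t, ⋂ i, ξ n i ⁻¹' B =
      ⋂ p ∈ t.sigma fun _ => Finset.univ, (fun p : Σ n, ι n => ξ p.1 p.2) p ⁻¹' B := by
    ext ω
    simp only [Set.mem_iInter, Set.mem_preimage, Finset.mem_sigma, Finset.mem_univ, and_true,
      Sigma.forall]
    exact ⟨fun h n i hn => h n hn i, fun h n hn i => h n i hn⟩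
  rw [hset, hindep.measure_inter_preimage_eq_mul _ fun _ _ => hB, Finset.prod_sigma]
  simp [measure_preimage_eq_of_map_eq (hmeas _ _) (hlaw _ _) hB]

lemma measure_iInter_preimage_s9 [∀ n, Fintype (ι n)] (hmeas : ∀ n i, Measurable (ξ n i))
    (hlaw : ∀ n i, P.map (ξ n i) = μ) (hindep : iIndepFun (fun p : Σ n, ι n => ξ p.1 p.2) P)
    (hB : MeasurableSet B) (n : ℕ) :
    P (⋂ i, ξ n i ⁻¹' B) = μ B ^ Fintype.card (ι n) := by
  simpa using measure_biInter_iInter_preimage_s9 hmeas hlaw hindep hB {n}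

lemma iIndepSet_iInter_preimage_s9 [∀ n, Fintype (ι n)] (hmeas : ∀ n i, Measurable (ξ n i))
    (hlaw : ∀ n i, P.map (ξ n i) = μ) (hindep : iIndepFun (fun p : Σ n, ι n => ξ p.1 p.2) P)
    (hB : MeasurableSet B) : iIndepSet (fun n => ⋂ i, ξ n i ⁻¹' B) P := by
  rw [iIndepSet_iff_meas_biInter fun n => .iInter fun i => hmeas n i hB]
  intro t
  rw [measure_biInter_iInter_preimage_s9 hmeas hlaw hindep hB]
  exact Finset.prod_congr rfl fun n _ => (measure_iInter_preimage_s9 hmeas hlaw hindep hB n).symm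

theorem ae_frequently_forall_mem_s9 [IsProbabilityMeasure P] [∀ n, Fintype (ι n)]
    (hmeas : ∀ n i, Measurable (ξ n i)) (hlaw : ∀ n i, P.map (ξ n i) = μ)
    (hindep : iIndepFun (fun p : Σ n, ι n => ξ p.1 p.2) P) (hB : MeasurableSet B)
    (hsum : ∑' n, μ B ^ Fintype.card (ι n) = ∞) :
    ∀ᵐ ω ∂P, ∃ᶠ n in atTop, ∀ i, ξ n i ω ∈ B := by
  set E : ℕ → Set Ω := fun n => ⋂ i, ξ n i ⁻¹' B
  have hE : ∀ n, MeasurableSet (E n) := fun n => .iInter fun i => hmeas n i hB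
  have hsumE : ∑' n, P (E n) = ∞ := by
    simpa only [E, measure_iInter_preimage_s9 hmeas hlaw hindep hB] using hsum
  have hlimsup : limsup E atTop ∈ ae P :=
    mem_ae_iff.2 <| (prob_compl_eq_zero_iff (MeasurableSet.measurableSet_limsup hE)).2 <|
      measure_limsup_eq_one hE (iIndepSet_iInter_preimage_s9 hmeas hlaw hindep hB) hsumE
  filter_upwards [hlimsup] with ω hω
  simpa [E] using mem_limsup_iff_frequently_mem.1 hω

lemma ae_forall_notMem_of_measure_eq_zero [∀ n, Countable (ι n)]
    (hmeas : ∀ n i, Measurable (ξ n i)) (hlaw : ∀ n i, P.map (ξ n i) = μ) (hB : μ B = 0) :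
    ∀ᵐ ω ∂P, ∀ n i, ξ n i ω ∉ B := by
  refine ae_all_iff.2 fun n => ae_all_iff.2 fun i => measure_eq_zero_iff_ae_notMem.1 ?_
  exact Measure.preimage_null_of_map_null (hmeas n i).aemeasurable (by rw [hlaw]; exact hB)

end Candidates

section SelectiveSampling

variable {X Ω : Type*} [MeasurableSpace X] [MeasurableSpace Ω] {P : Measure Ω} {μ : Measure X}
  {κ : ℕ → ℕ} {cand : (n : ℕ) → Fin (κ (n + 1)) → Ω → X} {z : ℕ → Ω → X} {B : Set X}

theorem ae_frequently_sample_mem [IsProbabilityMeasure P] [IsProbabilityMeasure μ]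
    (hκ : ∀ ρ : ℝ, 0 < ρ → ρ ≤ 1 →
      Tendsto (fun N => ∑ n ∈ Finset.Icc 1 N, ρ ^ κ n) atTop atTop)
    (hmeas : ∀ n i, Measurable (cand n i)) (hlaw : ∀ n i, P.map (cand n i) = μ)
    (hindep : iIndepFun (fun p : Σ n, Fin (κ (n + 1)) => cand p.1 p.2) P)
    (hz : ∀ ω n, ∃ i, z (n + 1) ω = cand n i ω) (hB : MeasurableSet B) (hpos : 0 < μ B) :
    ∀ᵐ ω ∂P, ∃ᶠ n in atTop, z (n + 1) ω ∈ B := by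
  have hsum : ∑' n, μ B ^ Fintype.card (Fin (κ (n + 1))) = ∞ := by
    simp only [Fintype.card_fin]
    refine ENNReal.tsum_succ_eq_top_of_tendsto_sum_Icc (a := fun n => μ B ^ κ n)
      (fun n => ENNReal.pow_ne_top (measure_ne_top μ B)) ?_
    simpa only [ENNReal.toReal_pow] using
      hκ _ (ENNReal.toReal_pos hpos.ne' (measure_ne_top μ B)) measureReal_le_one
  filter_upwards [ae_frequently_forall_mem_s9 hmeas hlaw hindep hB hsum] with ω hω
  refine hω.mono fun n hn => ?_
  obtain ⟨i, hi⟩ := hz ω n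
  exact hi ▸ hn i

lemma ae_sample_notMem (hmeas : ∀ n i, Measurable (cand n i))
    (hlaw : ∀ n i, P.map (cand n i) = μ) (hz : ∀ ω n, ∃ i, z (n + 1) ω = cand n i ω)
    (hB : μ B = 0) : ∀ᵐ ω ∂P, ∀ n, z (n + 1) ω ∉ B := by
  filter_upwards [ae_forall_notMem_of_measure_eq_zero hmeas hlaw hB] with ω hω n
  obtain ⟨i, hi⟩ := hz ω n
  exact hi ▸ hω n i

end SelectiveSampling

section NearestNeighbor

variable {X Y : Type*} [MetricSpace X] {f : X → Y} {s : ℕ → X} {g : ℕ → Y} {x : X}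

lemma eventually_nearestNeighbor_eq_of_mem_ball
    (hg : ∀ n, 1 ≤ n → ∃ i, 1 ≤ i ∧ i ≤ n ∧
      (∀ j, 1 ≤ j → j ≤ n → dist x (s i) ≤ dist x (s j)) ∧ g n = f (s i))
    {δ : ℝ} {m : ℕ} (hm : s (m + 1) ∈ ball x δ)
    (hlabel : ∀ n, s (n + 1) ∈ ball x δ → f (s (n + 1)) = f x) :
    ∀ᶠ n in atTop, g n = f x := by
  filter_upwards [eventually_ge_atTop (m + 1)] with n hn
  obtain ⟨i, hi1, hin, hmin, hgi⟩ := hg n (by omega)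
  obtain ⟨k, rfl⟩ : ∃ k, i = k + 1 := ⟨i - 1, by omega⟩
  have hclose : s (k + 1) ∈ ball x δ := by
    rw [mem_ball, dist_comm] at hm ⊢
    exact (hmin (m + 1) (by omega) hn).trans_lt hm
  rw [hgi, hlabel k hclose]

theorem eventually_nearestNeighbor_eq_of_isTopologicalBasis [MeasurableSpace X] {μ : Measure X}
    {𝓑 : Set (Set X)} (h𝓑 : TopologicalSpace.IsTopologicalBasis 𝓑)
    (hg : ∀ n, 1 ≤ n → ∃ i, 1 ≤ i ∧ i ≤ n ∧
      (∀ j, 1 ≤ j → j ≤ n → dist x (s i) ≤ dist x (s j)) ∧ g n = f (s i))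
    (hvisit : ∀ V ∈ 𝓑, 0 < μ V → ∃ n, s (n + 1) ∈ V)
    (hlabel : ∀ V ∈ 𝓑, ∀ y, μ (V ∩ {x | f x ≠ y}) = 0 → ∀ n, s (n + 1) ∈ V → f (s (n + 1)) = y)
    (hx : x ∈ μ.support) (hxb : ¬ IsFBoundaryPoint f μ x) :
    ∀ᶠ n in atTop, g n = f x := by
  obtain ⟨ε, hε, hnull⟩ : ∃ ε > 0, μ (ball x ε ∩ {x' | f x' ≠ f x}) = 0 := by
    simpa [IsFBoundaryPoint, pos_iff_ne_zero] using hxb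
  obtain ⟨W, hW, hxW, hWε⟩ := h𝓑.exists_subset_of_mem_open (mem_ball_self hε) isOpen_ball
  obtain ⟨δ, hδ, hδW⟩ := Metric.isOpen_iff.1 (h𝓑.isOpen hW) x hxW
  obtain ⟨V, hV, hxV, hVδ⟩ := h𝓑.exists_subset_of_mem_open (mem_ball_self hδ) isOpen_ball
  obtain ⟨m, hm⟩ :=
    hvisit V hV ((Measure.mem_support_iff_forall x).1 hx V ((h𝓑.isOpen hV).mem_nhds hxV))
  have hWnull : μ (W ∩ {x' | f x' ≠ f x}) = 0 :=
    measure_mono_null (Set.inter_subset_inter_left _ hWε) hnull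
  exact eventually_nearestNeighbor_eq_of_mem_ball hg (hVδ hm)
    fun n hn => hlabel W hW (f x) hWnull n (hδW hn)

end NearestNeighbor

theorem nmc_knn_convergence_in_measure_general
    {X : Type*} [MetricSpace X] [TopologicalSpace.SeparableSpace X]
    [MeasurableSpace X] [BorelSpace X]
    {Y : Type*} [Countable Y]
    (μ : Measure X) [IsProbabilityMeasure μ] (f : X → Y)
    {Ω : Type*} [MeasurableSpace Ω] (P : Measure Ω) [IsProbabilityMeasure P]
    (K : ℕ)
    -- the candidate-count function κ : ℕ⁺ → ℕ⁺ (κ (n+1) candidates at step n+1)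
    (κ : ℕ → ℕ)
    (hκ : ∀ ρ : ℝ, 0 < ρ → ρ ≤ 1 →
      Tendsto (fun N => ∑ n ∈ Finset.Icc 1 N, ρ ^ κ n) atTop atTop)
    -- at step n+1, κ(n+1) candidates are drawn, iid with law μ
    (cand : (n : ℕ) → Fin (κ (n + 1)) → Ω → X)
    (hmeas : ∀ n i, Measurable (cand n i))
    (hlaw : ∀ n i, P.map (cand n i) = μ)
    (hindep : iIndepFun
      (m := fun _ : Σ n : ℕ, Fin (κ (n + 1)) => (inferInstance : MeasurableSpace X))
      (fun p => cand p.1 p.2) P)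
    -- the sample z_{n+1} is a candidate maximizing the heuristic Φ(·, Z_n)
    (z : ℕ → Ω → X)
    (hsel : ∀ ω n, ∃ i : Fin (κ (n + 1)), z (n + 1) ω = cand n i ω ∧
      ∀ j : Fin (κ (n + 1)),
        nmcKNN f K (cand n j ω) (sampleSet z n ω) ≤
          nmcKNN f K (cand n i ω) (sampleSet z n ω))
    -- ζ_n is a nearest neighbor prediction over Z_n (ties broken arbitrarily)
    (ζ : ℕ → Ω → X → Y)
    (hζ : ∀ ω x n, 1 ≤ n → ∃ i, 1 ≤ i ∧ i ≤ n ∧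
      (∀ j, 1 ≤ j → j ≤ n → dist x (z i ω) ≤ dist x (z j ω)) ∧
      ζ n ω x = f (z i ω))
    (hbdry : μ {b | IsFBoundaryPoint f μ b} = 0) :
    ∀ᵐ ω ∂P, ∀ᵐ x ∂μ, ∀ᶠ n in atTop, ζ n ω x = f x := by
  have h𝓑 := TopologicalSpace.isBasis_countableBasis X
  have hz : ∀ ω n, ∃ i, z (n + 1) ω = cand n i ω := fun ω n => (hsel ω n).imp fun _ => And.left
  have hvisit : ∀ᵐ ω ∂P, ∀ V ∈ TopologicalSpace.countableBasis X, 0 < μ V →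
      ∃ n, z (n + 1) ω ∈ V := by
    refine (ae_ball_iff (TopologicalSpace.countable_countableBasis X)).2 fun V hV => ?_
    by_cases hpos : 0 < μ V
    · filter_upwards [ae_frequently_sample_mem hκ hmeas hlaw hindep hz
        (h𝓑.isOpen hV).measurableSet hpos] with ω hω _ using hω.exists
    · exact ae_of_all _ fun _ h => absurd h hpos
  have hlabel : ∀ᵐ ω ∂P, ∀ V ∈ TopologicalSpace.countableBasis X, ∀ y,
      μ (V ∩ {x | f x ≠ y}) = 0 → ∀ n, z (n + 1) ω ∈ V → f (z (n + 1) ω) = y := by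
    refine (ae_ball_iff (TopologicalSpace.countable_countableBasis X)).2
      fun V _ => ae_all_iff.2 fun y => ?_
    by_cases hnull : μ (V ∩ {x | f x ≠ y}) = 0
    · filter_upwards [ae_sample_notMem hmeas hlaw hz hnull] with ω hω _ n hn
      exact not_not.1 fun hne => hω n ⟨hn, hne⟩
    · exact ae_of_all _ fun _ h => absurd h hnull
  filter_upwards [hvisit, hlabel] with ω hvisitω hlabelω
  filter_upwards [μ.support_mem_ae, measure_eq_zero_iff_ae_notMem.1 hbdry] with x hx hxb
  exact eventually_nearestNeighbor_eq_of_isTopologicalBasis h𝓑 (hζ ω x) hvisitω hlabelω hx hxb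

/-- **Convergence in measure of the non-modal count heuristic (`K`-nearest
neighbors).** Fix `K ≥ 2`. If `X` is separable, the `f`-boundary has measure
zero, and the union of all `f`-contiguous components of measure zero itself
has measure zero, then with probability one the nearest neighbor predictions
converge to `f` μ-almost everywhere (i.e. in measure). -/
theorem nmc_knn_convergence_in_measure
    {X : Type*} [MetricSpace X] [TopologicalSpace.SeparableSpace X]
    [MeasurableSpace X] [BorelSpace X]
    {Y : Type*} [Countable Y]
    (μ : Measure X) [IsProbabilityMeasure μ] (f : X → Y)
    {Ω : Type*} [MeasurableSpace Ω] (P : Measure Ω) [IsProbabilityMeasure P]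
    (K : ℕ) (hK : 2 ≤ K)
    -- the candidate-count function κ : ℕ⁺ → ℕ⁺ (κ (n+1) candidates at step n+1)
    (κ : ℕ → ℕ) (hκpos : ∀ n, 1 ≤ κ n)
    (hκ : ∀ ρ : ℝ, 0 < ρ → ρ ≤ 1 →
      Tendsto (fun N => ∑ n ∈ Finset.Icc 1 N, ρ ^ κ n) atTop atTop)
    -- at step n+1, κ(n+1) candidates are drawn, iid with law μ
    (cand : (n : ℕ) → Fin (κ (n + 1)) → Ω → X)
    (hmeas : ∀ n i, Measurable (cand n i))
    (hlaw : ∀ n i, P.map (cand n i) = μ)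
    (hindep : iIndepFun
      (m := fun _ : Σ n : ℕ, Fin (κ (n + 1)) => (inferInstance : MeasurableSpace X))
      (fun p => cand p.1 p.2) P)
    -- the sample z_{n+1} is a candidate maximizing the heuristic Φ(·, Z_n)
    (z : ℕ → Ω → X)
    (hsel : ∀ ω n, ∃ i : Fin (κ (n + 1)), z (n + 1) ω = cand n i ω ∧
      ∀ j : Fin (κ (n + 1)),
        nmcKNN f K (cand n j ω) (sampleSet z n ω) ≤
          nmcKNN f K (cand n i ω) (sampleSet z n ω))
    -- ζ_n is a nearest neighbor prediction over Z_n (ties broken arbitrarily)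
    (ζ : ℕ → Ω → X → Y)
    (hζ : ∀ ω x n, 1 ≤ n → ∃ i, 1 ≤ i ∧ i ≤ n ∧
      (∀ j, 1 ≤ j → j ≤ n → dist x (z i ω) ≤ dist x (z j ω)) ∧
      ζ n ω x = f (z i ω))
    (hbdry : μ {b | IsFBoundaryPoint f μ b} = 0)
    (hnull : μ (⋃ C ∈ {C : Set X | IsFContiguousComponent f μ C ∧ μ C = 0}, C) = 0) :
    ∀ᵐ ω ∂P, ∀ᵐ x ∂μ, ∀ᶠ n in atTop, ζ n ω x = f x :=
  nmc_knn_convergence_in_measure_general μ f P K κ hκ cand hmeas hlaw hindep z hsel ζ hζ hbdry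
end

section
/- Let κ : ℕ⁺ → ℕ⁺ satisfy κ(n) ≤ H_{⌈log₂(n+1)⌉} for all n ≥ 1, where H_k = Σ_{i=1}^{k} 1/i is the k-th harmonic number. Then for every real ρ with 0 < ρ ≤ 1, the series Σ_{n=1}^∞ ρ^{κ(n)} diverges to infinity. -/
/-!
Every `n < 2 ^ K` has `⌈log₂ (n + 1)⌉ ≤ K`, so `κ n ≤ H_K ≤ 1 + log K` and therefore
`ρ ^ κ n ≥ ρ ^ (1 + log K) = ρ · K ^ log ρ`. The first `2 ^ K - 1` terms thus sum to at least
`(2 ^ K - 1) · ρ · K ^ log ρ`, and the exponential factor beats the fixed power of `K`.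
-/

open Filter Real Finset

lemma natCeil_logb_two_add_one_le {n K : ℕ} (h : n < 2 ^ K) :
    ⌈logb 2 ((n : ℝ) + 1)⌉₊ ≤ K := by
  have hcast : logb 2 ((n : ℝ) + 1) = logb (2 : ℕ) ((n + 1 : ℕ) : ℝ) := by push_cast; rfl
  rw [hcast, natCeil_logb_natCast]
  exact Nat.clog_le_of_le_pow h

lemma sum_Icc_one_div_le_one_add_log (K : ℕ) : ∑ i ∈ Icc 1 K, (1 : ℝ) / i ≤ 1 + log K := by
  simpa [harmonic_eq_sum_Icc, one_div] using harmonic_le_one_add_log K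

lemma mul_rpow_log_le_pow {ρ x : ℝ} (hρ0 : 0 < ρ) (hρ1 : ρ ≤ 1) (hx : 0 < x) {k : ℕ}
    (hk : (k : ℝ) ≤ 1 + log x) : ρ * x ^ log ρ ≤ ρ ^ k :=
  calc ρ * x ^ log ρ = ρ ^ (1 + log x) := by
        rw [rpow_add hρ0, rpow_one, rpow_def_of_pos hρ0, rpow_def_of_pos hx, mul_comm (log x)]
    _ ≤ ρ ^ (k : ℝ) := rpow_le_rpow_of_exponent_ge hρ0 hρ1 hk
    _ = ρ ^ k := rpow_natCast ρ k

lemma tendsto_two_pow_sub_one_mul_rpow (a : ℝ) :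
    Tendsto (fun K : ℕ => ((2 : ℝ) ^ K - 1) * (K : ℝ) ^ a) atTop atTop := by
  have hexp : Tendsto (fun K : ℕ => (2 : ℝ) ^ K * (K : ℝ) ^ a) atTop atTop := by
    refine ((tendsto_exp_mul_div_rpow_atTop (-a) (log 2) (log_pos one_lt_two)).comp
      tendsto_natCast_atTop_atTop).congr' ?_
    filter_upwards [eventually_gt_atTop 0] with K hK
    have hK : (0 : ℝ) < K := Nat.cast_pos.2 hK
    rw [Function.comp_apply, rpow_neg hK.le, div_inv_eq_mul, exp_mul,
      exp_log two_pos, rpow_natCast]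
  refine tendsto_atTop_mono' _ ?_ (hexp.atTop_div_const two_pos)
  filter_upwards [eventually_ge_atTop 1] with K hK
  have htwo : (2 : ℝ) ≤ 2 ^ K := by simpa using pow_le_pow_right₀ one_le_two hK
  have hpow : 0 ≤ (K : ℝ) ^ a := rpow_nonneg (Nat.cast_nonneg K) a
  nlinarith

lemma mul_le_sum_Icc_pow {κ : ℕ → ℕ}
    (hκle : ∀ n, 1 ≤ n →
      (κ n : ℝ) ≤ ∑ i ∈ Icc 1 ⌈logb 2 ((n : ℝ) + 1)⌉₊, (1 : ℝ) / i)
    {ρ : ℝ} (hρ0 : 0 < ρ) (hρ1 : ρ ≤ 1) (K : ℕ) :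
    ((2 : ℝ) ^ K - 1) * (ρ * (K : ℝ) ^ log ρ) ≤ ∑ n ∈ Icc 1 (2 ^ K - 1), ρ ^ κ n := by
  have hterm : ∀ n ∈ Icc 1 (2 ^ K - 1), ρ * (K : ℝ) ^ log ρ ≤ ρ ^ κ n := by
    intro n hn
    obtain ⟨hn1, hnK⟩ := mem_Icc.1 hn
    have hlt : n < 2 ^ K := by omega
    have hK : 0 < K := Nat.pos_of_ne_zero (by rintro rfl; simp at hlt; omega)
    refine mul_rpow_log_le_pow hρ0 hρ1 (Nat.cast_pos.2 hK) ?_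
    calc (κ n : ℝ) ≤ ∑ i ∈ Icc 1 ⌈logb 2 ((n : ℝ) + 1)⌉₊, (1 : ℝ) / i := hκle n hn1
      _ ≤ ∑ i ∈ Icc 1 K, (1 : ℝ) / i :=
        sum_le_sum_of_subset_of_nonneg (Icc_subset_Icc_right (natCeil_logb_two_add_one_le hlt))
          fun i _ _ => by positivity
      _ ≤ 1 + log K := sum_Icc_one_div_le_one_add_log K
  have hcard : ((#(Icc 1 (2 ^ K - 1)) : ℕ) : ℝ) = 2 ^ K - 1 := by
    rw [Nat.card_Icc, Nat.add_sub_cancel, Nat.cast_pred (Nat.two_pow_pos K)]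
    push_cast
    ring
  simpa [nsmul_eq_mul, hcard] using card_nsmul_le_sum _ _ _ hterm

theorem harmonic_log_kappa_admissible_general
    (κ : ℕ → ℕ)
    (hκle : ∀ n, 1 ≤ n →
      (κ n : ℝ) ≤ ∑ i ∈ Finset.Icc 1 ⌈Real.logb 2 ((n : ℝ) + 1)⌉₊, (1 : ℝ) / i) :
    ∀ ρ : ℝ, 0 < ρ → ρ ≤ 1 →
      Tendsto (fun N => ∑ n ∈ Finset.Icc 1 N, ρ ^ κ n) atTop atTop := by
  intro ρ hρ0 hρ1
  have hmono : Monotone fun N => ∑ n ∈ Icc 1 N, ρ ^ κ n := fun _ _ hab =>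
    sum_le_sum_of_subset_of_nonneg (Icc_subset_Icc_right hab)
      fun _ _ _ => pow_nonneg hρ0.le _
  have hlower : Tendsto (fun K : ℕ => ((2 : ℝ) ^ K - 1) * (ρ * (K : ℝ) ^ log ρ)) atTop atTop :=
    ((tendsto_two_pow_sub_one_mul_rpow (log ρ)).const_mul_atTop hρ0).congr fun K => by ring
  refine hmono.tendsto_atTop_atTop_iff.2 fun b => ?_
  obtain ⟨K, hK⟩ := (hlower.eventually_ge_atTop b).exists
  exact ⟨2 ^ K - 1, hK.trans (mul_le_sum_Icc_pow hκle hρ0 hρ1 K)⟩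

/-- **An admissible slowly-growing candidate count.** If
`κ(n) ≤ H_{⌈log₂(n+1)⌉}`, where `H_k = ∑_{i=1}^k 1/i` is the `k`-th harmonic
number, then for every `0 < ρ ≤ 1` the series `∑ ρ^{κ(n)}` diverges to
infinity. -/
theorem harmonic_log_kappa_admissible
    (κ : ℕ → ℕ) (hκpos : ∀ n, 1 ≤ κ n)
    (hκle : ∀ n, 1 ≤ n →
      (κ n : ℝ) ≤ ∑ i ∈ Finset.Icc 1 ⌈Real.logb 2 ((n : ℝ) + 1)⌉₊, (1 : ℝ) / i) :
    ∀ ρ : ℝ, 0 < ρ → ρ ≤ 1 →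
      Tendsto (fun N => ∑ n ∈ Finset.Icc 1 N, ρ ^ κ n) atTop atTop :=
  harmonic_log_kappa_admissible_general κ hκle
end

section
/- Let X = [0,1] ⊂ ℝ with the Euclidean metric and Lebesgue measure μ, and let Y = {0,1}. Fix reals ε_i with 0 < ε_i < 1/2^{i+1} for each i ≥ 1, let X₁ = {0} ∪ ⋃_{i=1}^∞ (1/2^i, 3/2^{i+1} + ε_i], and let f be the indicator function of X₁. Define the sample sequence z_1 = 0 and z_n = 2^{2−n} for n ≥ 2, and let ζ_n be the nearest neighbor prediction based on Z_n = {z_1,…,z_n}. Then for every n ≥ 2, μ({x ∈ [0,1] : ζ_n(x) = f(x)}) < μ({x ∈ [0,1] : ζ_{n−1}(x) = f(x)}); that is, the accuracy of the nearest neighbor predictions is strictly decreasing in n. -/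
/-!
Samples `z_2, z_3, …` are powers of two, and no power of two lies in `X₁`, while `z_1 = 0 ∈ X₁`.
Since `z_k = 2^(2-k)` is the smallest positive sample in `Z_k`, the prediction `ζ_k` is `1` below
the threshold `2^(1-k)` and `0` above it. Passing from `k = m` to `k = m + 1` moves the threshold
from `2/2^m` down to `1/2^m`, and on this dyadic block `X₁` is the initial segment
`(1/2^m, 3/2^(m+1) + ε_m]`, which is longer than half the block: the new sample turns more correct
predictions into wrong ones than vice versa, so the accuracy drops by exactly `2 ε_m`.
-/

open MeasureTheory Set

section Threshold

variable {α : Type*} [MeasurableSpace α] {μ : Measure α}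

theorem measure_eq_of_mem_iff_of_ne [NullSingletonClass μ] {s t : Set α} (c : α)
    (h : ∀ x ≠ c, x ∈ s ↔ x ∈ t) : μ s = μ t :=
  measure_congr <| (μ.ae_ne c).mono fun x hx => propext (h x hx)

variable [LinearOrder α] [TopologicalSpace α] [OrderClosedTopology α] [OpensMeasurableSpace α]

theorem measure_sep_le_iff_mem_lt {U S : Set α} {a t b : α} (hat : a ≤ t) (htb : t ≤ b)
    (hU : Ioc a b ⊆ U) (hU_fin : μ U ≠ ⊤) (hS : ∀ x ∈ Ioc a b, x ∈ S ↔ x ≤ t)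
    (h : μ (Ioc t b) < μ (Ioc a t)) :
    μ {x ∈ U | x ≤ a ↔ x ∈ S} < μ {x ∈ U | x ≤ b ↔ x ∈ S} := by
  set A := {x ∈ U | x ≤ a ↔ x ∈ S}
  set B := {x ∈ U | x ≤ b ↔ x ∈ S}
  have hA : A ∩ Ioc a b = Ioc t b := by
    ext x
    have hUx := @hU x
    specialize hS x
    simp only [A, mem_inter_iff, mem_sep_iff, mem_Ioc] at hS hUx ⊢
    grind
  have hB : B ∩ Ioc a b = Ioc a t := by
    ext x
    have hUx := @hU x
    specialize hS x
    simp only [B, mem_inter_iff, mem_sep_iff, mem_Ioc] at hS hUx ⊢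
    grind
  have hAB : A \ Ioc a b = B \ Ioc a b := by
    ext x
    simp only [A, B, mem_sdiff, mem_sep_iff, mem_Ioc]
    grind
  have hB_fin : μ (B \ Ioc a b) ≠ ⊤ :=
    ne_top_of_le_ne_top hU_fin (measure_mono fun x hx => hx.1.1)
  calc μ A = μ (A ∩ Ioc a b) + μ (A \ Ioc a b) :=
        (measure_inter_add_sdiff _ measurableSet_Ioc).symm
    _ < μ (B ∩ Ioc a b) + μ (B \ Ioc a b) := by
      rw [hA, hB, hAB]
      exact ENNReal.add_lt_add_right hB_fin h
    _ = μ B := measure_inter_add_sdiff _ measurableSet_Ioc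

end Threshold

theorem eq_of_mem_Ioo_zpow_of_mem_Ioc_zpow {K : Type*} [Semifield K] [LinearOrder K]
    [IsStrictOrderedRing K] {b x : K} (hb : 1 < b) {m n : ℤ}
    (hn : x ∈ Ioo (b ^ n) (b ^ (n + 1))) (hm : x ∈ Ioc (b ^ m) (b ^ (m + 1))) : n = m := by
  have h₁ : n < m + 1 := (zpow_lt_zpow_iff_right₀ hb).1 (hn.1.trans_le hm.2)
  have h₂ : m < n + 1 := (zpow_lt_zpow_iff_right₀ hb).1 (hm.1.trans hn.2)
  omega

theorem zpow_notMem_Ioo_zpow {K : Type*} [Semifield K] [LinearOrder K]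
    [IsStrictOrderedRing K] {b : K} (hb : 1 < b) (w n : ℤ) :
    b ^ w ∉ Ioo (b ^ n) (b ^ (n + 1)) := by
  rintro ⟨h₁, h₂⟩
  rw [zpow_lt_zpow_iff_right₀ hb] at h₁ h₂
  omega

theorem one_div_two_pow_eq_zpow (i : ℕ) : (1 : ℝ) / 2 ^ i = 2 ^ (-(i : ℤ)) := by
  simp [zpow_neg]

theorem two_div_two_pow_eq_zpow (i : ℕ) : (2 : ℝ) / 2 ^ i = 2 ^ (-(i : ℤ) + 1) := by
  rw [zpow_add₀ two_ne_zero, zpow_neg, zpow_one, zpow_natCast, div_eq_inv_mul]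

theorem three_div_two_pow_succ_add_mem_Ioo {i : ℕ} {e : ℝ} (he₀ : 0 < e)
    (he : e < 1 / 2 ^ (i + 1)) : 3 / 2 ^ (i + 1) + e ∈ Ioo ((1 : ℝ) / 2 ^ i) (2 / 2 ^ i) := by
  have : (0 : ℝ) < (2 ^ i)⁻¹ := by positivity
  simp only [div_eq_mul_inv, pow_succ, mul_inv, one_mul] at he ⊢
  constructor <;> linarith

theorem two_div_two_pow_sub_lt_sub_one_div_two_pow {i : ℕ} {e : ℝ} (he₀ : 0 < e) :
    2 / 2 ^ i - (3 / 2 ^ (i + 1) + e) < 3 / 2 ^ (i + 1) + e - 1 / 2 ^ i := by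
  simp only [div_eq_mul_inv, pow_succ, mul_inv, one_mul]
  linarith

def dyadicUnion (t : ℕ → ℝ) : Set ℝ :=
  {0} ∪ ⋃ i ∈ {i : ℕ | 1 ≤ i}, Ioc ((1 : ℝ) / 2 ^ i) (t i)

namespace dyadicUnion

variable {t : ℕ → ℝ}

theorem mem_Ioo_zpow_of_mem_Ioc (ht : ∀ i, 1 ≤ i → t i < 2 / 2 ^ i) {i : ℕ} (hi : 1 ≤ i)
    {x : ℝ} (hx : x ∈ Ioc ((1 : ℝ) / 2 ^ i) (t i)) :
    x ∈ Ioo ((2 : ℝ) ^ (-(i : ℤ))) (2 ^ (-(i : ℤ) + 1)) := by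
  rw [← one_div_two_pow_eq_zpow, ← two_div_two_pow_eq_zpow]
  exact ⟨hx.1, hx.2.trans_lt (ht i hi)⟩

theorem zpow_notMem (ht : ∀ i, 1 ≤ i → t i < 2 / 2 ^ i) (w : ℤ) :
    (2 : ℝ) ^ w ∉ dyadicUnion t := by
  rintro (h | h)
  · exact (zpow_pos two_pos w).ne' h
  · simp only [mem_iUnion] at h
    obtain ⟨i, hi, hw⟩ := h
    exact zpow_notMem_Ioo_zpow one_lt_two w _ (mem_Ioo_zpow_of_mem_Ioc ht hi hw)

theorem mem_iff_le (ht : ∀ i, 1 ≤ i → t i < 2 / 2 ^ i) {m : ℕ} (hm : 1 ≤ m) {x : ℝ}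
    (hx : x ∈ Ioc ((1 : ℝ) / 2 ^ m) (2 / 2 ^ m)) :
    x ∈ dyadicUnion t ↔ x ≤ t m := by
  constructor
  · rintro (h | h)
    · exact absurd h (hx.1.trans_le' (by positivity)).ne'
    · simp only [mem_iUnion] at h
      obtain ⟨i, hi, hxi⟩ := h
      rw [one_div_two_pow_eq_zpow, two_div_two_pow_eq_zpow] at hx
      obtain rfl : i = m := by
        have := eq_of_mem_Ioo_zpow_of_mem_Ioc_zpow one_lt_two
          (mem_Ioo_zpow_of_mem_Ioc ht hi hxi) hx
        omega
      exact hxi.2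
  · exact fun hxt => Or.inr (mem_biUnion hm ⟨hx.1, hxt⟩)

end dyadicUnion

section NearestNeighbor

theorem nearest_eq_one_of_lt {z : ℕ → ℝ} (hz1 : z 1 = 0) {n i : ℕ} {x c : ℝ} (hx : 0 ≤ x)
    (hxc : x < c) (hfar : ∀ j, 2 ≤ j → j ≤ n → 2 * c ≤ z j) (hi : 1 ≤ i ∧ i ≤ n)
    (hmin : ∀ j, 1 ≤ j → j ≤ n → |x - z i| ≤ |x - z j|) : i = 1 := by
  by_contra hi1
  have h₁ := hmin 1 le_rfl (hi.1.trans hi.2)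
  have h₂ := hfar i (by omega) hi.2
  rw [hz1, sub_zero, abs_of_nonneg hx, abs_sub_comm] at h₁
  linarith [le_abs_self (z i - x)]

theorem nearest_ne_one_of_lt {z : ℕ → ℝ} (hz1 : z 1 = 0) {n i : ℕ} {x c : ℝ} (hc : 0 < c)
    (hcx : c < x) (hn : 1 ≤ n) (hzn : z n = 2 * c)
    (hmin : ∀ j, 1 ≤ j → j ≤ n → |x - z i| ≤ |x - z j|) : i ≠ 1 := by
  rintro rfl
  have h := hmin n hn le_rfl
  rw [hz1, sub_zero, abs_of_pos (hc.trans hcx), hzn] at h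
  linarith [(abs_sub_lt_iff.2 ⟨by linarith, by linarith⟩ : |x - 2 * c| < x)]

variable {z : ℕ → ℝ} {X : Set ℝ} {f : ℝ → ℕ} {ζ : ℕ → ℝ → ℕ}

theorem nearestNeighbor_eq_ite (hz1 : z 1 = 0)
    (hzn : ∀ n, 2 ≤ n → z n = (2 : ℝ) ^ (2 - (n : ℤ)))
    (hX0 : 0 ∈ X) (hXpow : ∀ w : ℤ, (2 : ℝ) ^ w ∉ X) (hf : f = X.indicator fun _ => 1)
    (hζ : ∀ n, 1 ≤ n → ∀ x, ∃ i, 1 ≤ i ∧ i ≤ n ∧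
      (∀ j, 1 ≤ j → j ≤ n → |x - z i| ≤ |x - z j|) ∧ ζ n x = f (z i))
    {k : ℕ} (hk : 1 ≤ k) {x : ℝ} (hx : x ∈ Icc 0 1) (hxc : x ≠ 2 ^ (1 - (k : ℤ))) :
    ζ k x = if x < 2 ^ (1 - (k : ℤ)) then 1 else 0 := by
  obtain ⟨i, hi1, hik, hmin, hζx⟩ := hζ k hk x
  have hz_two_mul : ∀ j, 2 ≤ j → z j = 2 * 2 ^ (1 - (j : ℤ)) := fun j hj => by
    rw [hzn j hj, ← zpow_one_add₀ two_ne_zero]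
    ring_nf
  split_ifs with hlt
  · have hfar : ∀ j, 2 ≤ j → j ≤ k → 2 * 2 ^ (1 - (k : ℤ)) ≤ z j := fun j hj hjk => by
      rw [hz_two_mul j hj]
      gcongr
      norm_num
    obtain rfl := nearest_eq_one_of_lt hz1 hx.1 hlt hfar ⟨hi1, hik⟩ hmin
    rw [hζx, hz1, hf, indicator_of_mem hX0]
  · have hgt : 2 ^ (1 - (k : ℤ)) < x := lt_of_le_of_ne (not_lt.1 hlt) hxc.symm
    have hk2 : 2 ≤ k := by
      by_contra! hk2
      obtain rfl : k = 1 := by omega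
      norm_num at hgt
      linarith [hx.2]
    have hi2 : 2 ≤ i := by
      have := nearest_ne_one_of_lt hz1 (zpow_pos two_pos _) hgt hk (hz_two_mul k hk2) hmin
      omega
    rw [hζx, hzn i hi2, hf, indicator_of_notMem (hXpow _)]

theorem volume_nearestNeighbor_correct_eq (hz1 : z 1 = 0)
    (hzn : ∀ n, 2 ≤ n → z n = (2 : ℝ) ^ (2 - (n : ℤ)))
    (hX0 : 0 ∈ X) (hXpow : ∀ w : ℤ, (2 : ℝ) ^ w ∉ X) (hf : f = X.indicator fun _ => 1)
    (hζ : ∀ n, 1 ≤ n → ∀ x, ∃ i, 1 ≤ i ∧ i ≤ n ∧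
      (∀ j, 1 ≤ j → j ≤ n → |x - z i| ≤ |x - z j|) ∧ ζ n x = f (z i))
    {k : ℕ} (hk : 1 ≤ k) :
    volume {x ∈ Icc (0 : ℝ) 1 | ζ k x = f x} =
      volume {x ∈ Icc (0 : ℝ) 1 | x ≤ 2 ^ (1 - (k : ℤ)) ↔ x ∈ X} := by
  refine measure_eq_of_mem_iff_of_ne (2 ^ (1 - (k : ℤ))) fun x hxc =>
    and_congr_right fun hx => ?_
  rw [nearestNeighbor_eq_ite hz1 hzn hX0 hXpow hf hζ hk hx hxc, hf, le_iff_lt_or_eq,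
    or_iff_left hxc]
  by_cases hxX : x ∈ X <;> by_cases hlt : x < 2 ^ (1 - (k : ℤ)) <;> simp [hxX, hlt]

end NearestNeighbor

/-- **Selective sampling may fail badly.** On `X = [0,1]` with Lebesgue
measure, let `X₁ = {0} ∪ ⋃_{i≥1} (1/2^i, 3/2^{i+1} + ε_i]` with
`0 < ε_i < 1/2^{i+1}`, let `f` be the indicator function of `X₁`, and take the
samples `z_1 = 0`, `z_n = 2^{2-n}` for `n ≥ 2`. Then the accuracy of the
nearest neighbor predictions `ζ_n` is strictly decreasing in `n` for
`n ≥ 2`. -/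
theorem selective_sampling_may_fail
    (ε : ℕ → ℝ) (hε : ∀ i, 1 ≤ i → 0 < ε i ∧ ε i < 1 / 2 ^ (i + 1))
    (X₁ : Set ℝ)
    (hX₁ : X₁ = {0} ∪ ⋃ i ∈ {i : ℕ | 1 ≤ i},
      Set.Ioc ((1 : ℝ) / 2 ^ i) (3 / 2 ^ (i + 1) + ε i))
    (f : ℝ → ℕ) (hf : f = X₁.indicator fun _ => 1)
    (z : ℕ → ℝ) (hz1 : z 1 = 0) (hzn : ∀ n, 2 ≤ n → z n = (2 : ℝ) ^ (2 - (n : ℤ)))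
    -- ζ_n is a nearest neighbor prediction over Z_n = {z_1, …, z_n}
    -- (ties broken arbitrarily)
    (ζ : ℕ → ℝ → ℕ)
    (hζ : ∀ n, 1 ≤ n → ∀ x, ∃ i, 1 ≤ i ∧ i ≤ n ∧
      (∀ j, 1 ≤ j → j ≤ n → |x - z i| ≤ |x - z j|) ∧ ζ n x = f (z i)) :
    ∀ n, 2 ≤ n →
      volume {x ∈ Set.Icc (0 : ℝ) 1 | ζ n x = f x} <
        volume {x ∈ Set.Icc (0 : ℝ) 1 | ζ (n - 1) x = f x} := by
  intro n hn
  obtain ⟨m, rfl⟩ : ∃ m, n = m + 1 := ⟨n - 1, by omega⟩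
  have hm : 1 ≤ m := by omega
  set t : ℕ → ℝ := fun i => 3 / 2 ^ (i + 1) + ε i
  have hX : X₁ = dyadicUnion t := hX₁
  have ht : ∀ i, 1 ≤ i → t i ∈ Ioo (1 / 2 ^ i) (2 / 2 ^ i) := fun i hi =>
    three_div_two_pow_succ_add_mem_Ioo (hε i hi).1 (hε i hi).2
  have hXpow := hX ▸ dyadicUnion.zpow_notMem fun i hi => (ht i hi).2
  have hX0 : (0 : ℝ) ∈ X₁ := hX ▸ Or.inl rfl
  have ha : (2 : ℝ) ^ (1 - ((m + 1 : ℕ) : ℤ)) = 1 / 2 ^ m := by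
    rw [one_div_two_pow_eq_zpow]; push_cast; ring_nf
  have hb : (2 : ℝ) ^ (1 - (m : ℤ)) = 2 / 2 ^ m := by
    rw [two_div_two_pow_eq_zpow]; ring_nf
  rw [Nat.add_sub_cancel, volume_nearestNeighbor_correct_eq hz1 hzn hX0 hXpow hf hζ (by omega),
    volume_nearestNeighbor_correct_eq hz1 hzn hX0 hXpow hf hζ hm, ha, hb]
  refine measure_sep_le_iff_mem_lt (ht m hm).1.le (ht m hm).2.le ?_ measure_Icc_lt_top.ne
    (fun x hx => hX ▸ dyadicUnion.mem_iff_le (fun i hi => (ht i hi).2) hm hx) ?_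
  · refine Ioc_subset_Icc_self.trans (Icc_subset_Icc (by positivity) ?_)
    exact div_le_one_of_le₀ (le_self_pow₀ one_le_two (by omega)) (by positivity)
  · rw [Real.volume_Ioc, Real.volume_Ioc, ENNReal.ofReal_lt_ofReal_iff (sub_pos.2 (ht m hm).1)]
    exact two_div_two_pow_sub_lt_sub_one_div_two_pow (hε m hm).1
end
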